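/- arXiv:1301.7179 — 7 statements merged into one kernel-verified Lean document; each statement's English description precedes it below -/
import Mathlib

section
/- Let A be a d×d real matrix with nonnegative entries, let u and v be vectors with strictly positive entries, and suppose the series ∑_{k≥1} vᵀ A^{k-1} u converges. Then the spectral radius of A is strictly less than 1. -/
open Matrix
/-- Spectral radius of a real matrix: the maximum modulus of its complex eigenvalues. -/
noncomputable def specRadius {n : ℕ} (A : Matrix (Fin n) (Fin n) ℝ) : ℝ :=
  (((A.map (Complex.ofReal)).charpoly.roots.map (fun z => ‖z‖)).toList).foldr max 0

/-! If `μ` is a complex eigenvalue of `A` with eigenvector `x`, nonnegativity of `A` and the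
triangle inequality give `‖μ‖ ^ k • |x| ≤ A ^ k *ᵥ |x|` entrywise. Dominating `|x| ≤ c • u` and
pairing with `v` yields `‖μ‖ ^ k * (v ⬝ᵥ |x|) ≤ c * (v ⬝ᵥ A ^ k *ᵥ u)`, whose right side tends to
zero as the general term of a convergent series. Since `v ⬝ᵥ |x| > 0`, `‖μ‖ ^ k → 0`, so `‖μ‖ < 1`. -/

open Filter Polynomial

lemma List.foldr_max_lt {α : Type*} [LinearOrder α] {l : List α} {b c : α} (hb : b < c)
    (h : ∀ x ∈ l, x < c) : l.foldr max b < c := by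
  induction l with
  | nil => exact hb
  | cons a l ih =>
    exact max_lt (h a List.mem_cons_self) (ih fun x hx => h x (List.mem_cons_of_mem a hx))

lemma exists_le_smul_of_pos {n : Type*} [Fintype n] {u : n → ℝ} (hu : ∀ i, 0 < u i)
    (y : n → ℝ) : ∃ c : ℝ, y ≤ c • u := by
  refine ⟨∑ j, |y j| / u j, fun i => ?_⟩
  have hi : |y i| / u i ≤ ∑ j, |y j| / u j :=
    Finset.single_le_sum (fun j _ => div_nonneg (abs_nonneg _) (hu j).le) (Finset.mem_univ i)
  calc y i ≤ |y i| / u i * u i := by rw [div_mul_cancel₀ _ (hu i).ne']; exact le_abs_self _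
    _ ≤ (∑ j, |y j| / u j) * u i := mul_le_mul_of_nonneg_right hi (hu i).le

namespace Matrix

variable {n : Type*} [Fintype n]

lemma exists_pow_mulVec_eq_of_mem_roots_charpoly [DecidableEq n] {K : Type*} [Field K]
    {B : Matrix n n K} {μ : K} (hμ : μ ∈ B.charpoly.roots) :
    ∃ x ≠ 0, ∀ k : ℕ, (B ^ k) *ᵥ x = μ ^ k • x := by
  have hμ' : Module.End.HasEigenvalue (toLin' B) μ := by
    rw [Module.End.hasEigenvalue_iff_isRoot_charpoly, charpoly_toLin']
    exact isRoot_of_mem_roots hμ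
  obtain ⟨x, hx⟩ := hμ'.exists_hasEigenvector
  refine ⟨x, hx.2, fun k => ?_⟩
  rw [← toLin'_apply, toLin'_pow]
  exact hx.pow_apply k

variable {R : Type*} [Semiring R] [PartialOrder R] [IsOrderedRing R]

lemma mulVec_mono_of_nonneg {m : Type*} {M : Matrix m n R} (hM : ∀ i j, 0 ≤ M i j)
    {x y : n → R} (hxy : x ≤ y) : M *ᵥ x ≤ M *ᵥ y :=
  fun i => dotProduct_le_dotProduct_of_nonneg_left hxy (hM i)

lemma norm_map_ofReal_mulVec_le {m : Type*} {M : Matrix m n ℝ} (hM : ∀ i j, 0 ≤ M i j)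
    (x : n → ℂ) (i : m) : ‖(M.map Complex.ofReal *ᵥ x) i‖ ≤ (M *ᵥ fun j => ‖x j‖) i := by
  refine (norm_sum_le _ _).trans_eq (Finset.sum_congr rfl fun j _ => ?_)
  simp [Complex.norm_real, abs_of_nonneg (hM i j)]

lemma norm_pow_smul_le_pow_mulVec [DecidableEq n] {A : Matrix n n ℝ} (hA : ∀ i j, 0 ≤ A i j)
    {μ : ℂ} {x : n → ℂ} (hx : ∀ k : ℕ, (A.map Complex.ofReal ^ k) *ᵥ x = μ ^ k • x) (k : ℕ) :
    ‖μ‖ ^ k • (fun i => ‖x i‖) ≤ (A ^ k) *ᵥ fun i => ‖x i‖ := by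
  intro i
  have h := norm_map_ofReal_mulVec_le (pow_apply_nonneg hA k) x i
  have hpow : (A ^ k).map Complex.ofReal = A.map Complex.ofReal ^ k :=
    Matrix.map_pow A Complex.ofRealHom k
  rwa [hpow, hx k, Pi.smul_apply, norm_smul, norm_pow] at h

theorem norm_lt_one_of_mem_roots_charpoly_of_summable [DecidableEq n] {A : Matrix n n ℝ} (hA : ∀ i j, 0 ≤ A i j) {u v : n → ℝ}
    (hu : ∀ i, 0 < u i) (hv : ∀ i, 0 < v i)
    (hsum : Summable fun k : ℕ => v ⬝ᵥ ((A ^ k) *ᵥ u)) {μ : ℂ}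
    (hμ : μ ∈ (A.map Complex.ofReal).charpoly.roots) : ‖μ‖ < 1 := by
  obtain ⟨x, hx0, hx⟩ := exists_pow_mulVec_eq_of_mem_roots_charpoly hμ
  set y : n → ℝ := fun i => ‖x i‖
  obtain ⟨c, hyc⟩ := exists_le_smul_of_pos hu y
  have hvy : 0 < v ⬝ᵥ y := by
    obtain ⟨j, hj⟩ := Function.ne_iff.1 hx0
    exact Finset.sum_pos' (fun i _ => mul_nonneg (hv i).le (norm_nonneg _))
      ⟨j, Finset.mem_univ j, mul_pos (hv j) (norm_pos_iff.2 hj)⟩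
  have hbound : ∀ k : ℕ, ‖μ‖ ^ k ≤ c / (v ⬝ᵥ y) * (v ⬝ᵥ ((A ^ k) *ᵥ u)) := by
    intro k
    rw [div_mul_eq_mul_div, le_div_iff₀ hvy]
    have hle : ‖μ‖ ^ k • y ≤ c • (A ^ k) *ᵥ u := by
      rw [← mulVec_smul]
      exact (norm_pow_smul_le_pow_mulVec hA hx k).trans
        (mulVec_mono_of_nonneg (pow_apply_nonneg hA k) hyc)
    simpa [dotProduct_smul, mul_comm] using
      dotProduct_le_dotProduct_of_nonneg_left hle fun i => (hv i).le
  have hpow : Tendsto (fun k : ℕ => ‖μ‖ ^ k) atTop (nhds 0) :=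
    squeeze_zero (fun k => by positivity) hbound
      (by simpa using hsum.tendsto_atTop_zero.const_mul (c / (v ⬝ᵥ y)))
  simpa [abs_of_nonneg (norm_nonneg μ)] using tendsto_pow_atTop_nhds_zero_iff.1 hpow

end Matrix

theorem stmt2 {d : ℕ} (A : Matrix (Fin d) (Fin d) ℝ)
    (hA : ∀ i j, 0 ≤ A i j)
    (u v : Fin d → ℝ) (hu : ∀ i, 0 < u i) (hv : ∀ i, 0 < v i)
    (hsum : Summable (fun k : ℕ => v ⬝ᵥ ((A ^ k) *ᵥ u))) :
    specRadius A < 1 := by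
  refine List.foldr_max_lt one_pos fun r hr => ?_
  obtain ⟨μ, hμ, rfl⟩ := Multiset.mem_map.1 (Multiset.mem_toList.1 hr)
  exact norm_lt_one_of_mem_roots_charpoly_of_summable hA hu hv hsum hμ
end

section
/- Let A be a d×d matrix with strictly positive entries and spectral radius ρ(A) < 1, and suppose u, v are vectors with strictly positive entries. Define Φ_n = vᵀ A^{n-1} u for n ≥ 1. Then lim_{n→∞} (log Φ_n)/n = log ρ(A). -/
/-!
Since `Aⁿ` has nonnegative entries and `u`, `v` are bounded above and below by positive
constants, `vᵀ Aⁿ u` is comparable to the ℓ^∞ operator norm `‖Aⁿ‖` up to factors independent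
of `n`; these disappear after taking `log` and dividing by `n`, and Gelfand's formula
`‖Aⁿ‖^(1/n) → ρ(A)` gives the limit. The limit is `log ρ(A)` and not `-∞` because `ρ(A) > 0`:
the eigenvalues of `A` sum to its trace, which is positive.
-/

open Matrix Filter

open Topology

attribute [local instance] Matrix.linftyOpSeminormedAddCommGroup Matrix.linftyOpNormedAddCommGroup
  Matrix.linftyOpNormedRing Matrix.linftyOpNormedAlgebra

theorem List.foldr_max_le {α : Type*} [LinearOrder α] {l : List α} {a b : α} (hb : b ≤ a)
    (h : ∀ x ∈ l, x ≤ a) : l.foldr max b ≤ a := by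
  induction l with
  | nil => exact hb
  | cons x l ih => exact max_le (h x mem_cons_self) (ih fun y hy => h y (mem_cons_of_mem x hy))

theorem Real.log_rpow_one_div_natCast {x : ℝ} (hx : 0 ≤ x) (n : ℕ) :
    Real.log (x ^ (1 / n : ℝ)) = Real.log x / n := by
  rcases hx.eq_or_lt with rfl | hx
  · rcases n.eq_zero_or_pos with rfl | hn
    · simp
    · rw [one_div, Real.zero_rpow (inv_ne_zero (by positivity))]
      simp
  · rw [Real.log_rpow hx]
    ring

theorem tendsto_log_norm_pow_div {𝔸 : Type*} [NormedRing 𝔸] [NormedAlgebra ℂ 𝔸] [CompleteSpace 𝔸]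
    {a : 𝔸} {r : ℝ} (hr : 0 < r) (ha : spectralRadius ℂ a = ENNReal.ofReal r) :
    Tendsto (fun n : ℕ => Real.log ‖a ^ n‖ / n) atTop (𝓝 (Real.log r)) := by
  have hroot : Tendsto (fun n : ℕ => ‖a ^ n‖ ^ (1 / n : ℝ)) atTop (𝓝 r) := by
    have := (ENNReal.tendsto_toReal ENNReal.ofReal_ne_top).comp
      (ha ▸ spectrum.pow_nnnorm_pow_one_div_tendsto_nhds_spectralRadius a)
    simpa [Function.comp_def, ← ENNReal.toReal_rpow, hr.le] using this
  refine ((Real.continuousAt_log hr.ne').tendsto.comp hroot).congr fun n => ?_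
  exact Real.log_rpow_one_div_natCast (norm_nonneg _) n

theorem tendsto_comp_sub_one_div_natCast {f : ℕ → ℝ} {L : ℝ}
    (h : Tendsto (fun n : ℕ => f n / n) atTop (𝓝 L)) :
    Tendsto (fun n : ℕ => f (n - 1) / n) atTop (𝓝 L) := by
  have hsucc : Tendsto (fun n : ℕ => f n / (n + 1)) atTop (𝓝 L) := by
    have := h.mul (tendsto_natCast_div_add_atTop (1 : ℝ))
    rw [mul_one] at this
    refine this.congr' ((eventually_ne_atTop 0).mono fun n hn => ?_)
    field_simp
  refine (hsucc.comp (tendsto_sub_atTop_nat 1)).congr' ((eventually_ge_atTop 1).mono fun n hn => ?_)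
  simp [Nat.cast_sub hn]

theorem tendsto_log_div_of_le_of_le {f g : ℕ → ℝ} {c₁ c₂ L : ℝ} (hc₁ : 0 < c₁) (hc₂ : 0 < c₂)
    (hf : ∀ n, 0 < f n) (hlow : ∀ n, c₁ * g n ≤ f n) (hup : ∀ n, f n ≤ c₂ * g n)
    (hg : Tendsto (fun n : ℕ => Real.log (g n) / n) atTop (𝓝 L)) :
    Tendsto (fun n : ℕ => Real.log (f n) / n) atTop (𝓝 L) := by
  have hg_pos (n : ℕ) : 0 < g n := pos_of_mul_pos_right ((hf n).trans_le (hup n)) hc₂.le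
  have hlim {c : ℝ} (hc : 0 < c) :
      Tendsto (fun n : ℕ => Real.log (c * g n) / n) atTop (𝓝 L) := by
    have := (tendsto_const_div_atTop_nhds_zero_nat (Real.log c)).add hg
    rw [zero_add] at this
    refine this.congr fun n => ?_
    rw [Real.log_mul hc.ne' (hg_pos n).ne', add_div]
  refine tendsto_of_tendsto_of_tendsto_of_le_of_le (hlim hc₁) (hlim hc₂) (fun n => ?_) (fun n => ?_)
  · exact div_le_div_of_nonneg_right (Real.log_le_log (mul_pos hc₁ (hg_pos n)) (hlow n)) n.cast_nonneg
  · exact div_le_div_of_nonneg_right (Real.log_le_log (hf n) (hup n)) n.cast_nonneg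

section SpecRadius

variable {d : ℕ} (A : Matrix (Fin d) (Fin d) ℝ)

theorem norm_le_specRadius {z : ℂ} (hz : z ∈ (A.map Complex.ofReal).charpoly.roots) :
    ‖z‖ ≤ specRadius A :=
  List.le_max_of_le' 0 (Multiset.mem_toList.2 (Multiset.mem_map_of_mem _ hz)) le_rfl

theorem spectralRadius_map_ofReal :
    spectralRadius ℂ (A.map Complex.ofReal) = ENNReal.ofReal (specRadius A) := by
  set M := A.map Complex.ofReal
  have hroot {z : ℂ} : z ∈ spectrum ℂ M ↔ z ∈ M.charpoly.roots := by
    rw [mem_spectrum_iff_isRoot_charpoly, Polynomial.mem_roots M.charpoly_monic.ne_zero]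
  have hle : spectralRadius ℂ M ≤ ENNReal.ofReal (specRadius A) :=
    iSup₂_le fun z hz => ENNReal.ofReal_coe_nnreal.symm.trans_le
      (ENNReal.ofReal_le_ofReal (norm_le_specRadius A (hroot.1 hz)))
  have hne_top := (hle.trans_lt ENNReal.ofReal_lt_top).ne
  refine le_antisymm hle ((ENNReal.ofReal_le_iff_le_toReal hne_top).2 ?_)
  refine List.foldr_max_le ENNReal.toReal_nonneg fun x hx => ?_
  obtain ⟨z, hz, rfl⟩ := Multiset.mem_map.1 (Multiset.mem_toList.1 hx)
  refine (ENNReal.ofReal_le_iff_le_toReal hne_top).1 ?_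
  exact ENNReal.ofReal_coe_nnreal.trans_le
    (le_iSup₂ (f := fun k (_ : k ∈ spectrum ℂ M) => (‖k‖₊ : ENNReal)) z (hroot.2 hz))

theorem specRadius_pos_of_trace_ne_zero (h : A.trace ≠ 0) : 0 < specRadius A := by
  by_contra! hle
  have hzero : ∀ z ∈ (A.map Complex.ofReal).charpoly.roots, z = 0 := fun z hz =>
    norm_le_zero_iff.1 ((norm_le_specRadius A hz).trans hle)
  have := trace_eq_sum_roots_charpoly (A.map Complex.ofReal)
  rw [Multiset.sum_eq_zero hzero] at this
  exact h (Complex.ofReal_eq_zero.1 ((AddMonoidHom.map_trace Complex.ofRealHom A).trans this))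

end SpecRadius

section Positivity

variable {R : Type*} [CommSemiring R] [PartialOrder R] [IsStrictOrderedRing R]
  {m n : Type*} [Fintype n] [Nonempty n]

theorem dotProduct_pos {v w : n → R} (hv : ∀ i, 0 < v i) (hw : ∀ i, 0 < w i) : 0 < v ⬝ᵥ w :=
  Finset.sum_pos (fun i _ => mul_pos (hv i) (hw i)) Finset.univ_nonempty

theorem Matrix.mulVec_pos {B : Matrix m n R} (hB : ∀ i j, 0 < B i j) {w : n → R} (hw : ∀ j, 0 < w j)
    (i : m) : 0 < (B *ᵥ w) i :=
  dotProduct_pos (hB i) hw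

theorem Matrix.pow_mulVec_pos [DecidableEq n] {A : Matrix n n R} (hA : ∀ i j, 0 < A i j) {w : n → R}
    (hw : ∀ j, 0 < w j) (k : ℕ) (i : n) : 0 < (A ^ k *ᵥ w) i := by
  induction k generalizing i with
  | zero => simpa using hw i
  | succ k ih => simpa [pow_succ', ← mulVec_mulVec] using mulVec_pos hA ih i

end Positivity

namespace Matrix

variable {m n : Type*} [Fintype m] [Fintype n]

theorem linfty_opNorm_map_ofReal (B : Matrix m n ℝ) : ‖B.map Complex.ofReal‖ = ‖B‖ := by
  simp [linfty_opNorm_def]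

theorem linfty_opNorm_le_sum_sum {α : Type*} [SeminormedAddCommGroup α] (B : Matrix m n α) :
    ‖B‖ ≤ ∑ i, ∑ j, ‖B i j‖ := by
  have : ‖B‖₊ ≤ ∑ i, ∑ j, ‖B i j‖₊ := by
    rw [linfty_opNNNorm_def]
    exact Finset.sup_le fun i _ => Finset.single_le_sum (f := fun i => ∑ j, ‖B i j‖₊)
      (fun _ _ => zero_le) (Finset.mem_univ i)
  simpa only [← coe_nnnorm, NNReal.coe_sum] using NNReal.coe_le_coe.2 this

theorem mul_linfty_opNorm_le_dotProduct_mulVec {B : Matrix m n ℝ} (hB : ∀ i j, 0 ≤ B i j)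
    {v : m → ℝ} {u : n → ℝ} {a b : ℝ} (ha : 0 ≤ a) (hb : 0 ≤ b) (hv : ∀ i, b ≤ v i)
    (hu : ∀ j, a ≤ u j) : b * a * ‖B‖ ≤ v ⬝ᵥ (B *ᵥ u) := calc
  b * a * ‖B‖ ≤ b * a * ∑ i, ∑ j, B i j := by
    gcongr
    simpa only [Real.norm_of_nonneg (hB _ _)] using linfty_opNorm_le_sum_sum B
  _ = ∑ j, ∑ i, b * B i j * a := by
    rw [Finset.sum_comm, Finset.mul_sum]
    exact Finset.sum_congr rfl fun j _ => by rw [Finset.mul_sum]; ring_nf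
  _ ≤ ∑ j, ∑ i, v i * B i j * u j := by
    gcongr with j _ i _
    · exact mul_nonneg (hb.trans (hv i)) (hB i j)
    · exact hB i j
    · exact hv i
    · exact hu j
  _ = v ⬝ᵥ (B *ᵥ u) := (dot_mulVec_eq_sum_sum v B u).symm

theorem dotProduct_mulVec_le (B : Matrix m n ℝ) (v : m → ℝ) (u : n → ℝ) :
    v ⬝ᵥ (B *ᵥ u) ≤ Fintype.card m * ‖v‖ * ‖u‖ * ‖B‖ := calc
  v ⬝ᵥ (B *ᵥ u) ≤ ∑ i : m, ‖v‖ * ‖B *ᵥ u‖ := Finset.sum_le_sum fun i _ =>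
    (Real.le_norm_self _).trans <| (norm_mul _ _).trans_le <|
      mul_le_mul (norm_le_pi_norm v i) (norm_le_pi_norm _ i) (norm_nonneg _) (norm_nonneg _)
  _ ≤ ∑ i : m, ‖v‖ * (‖B‖ * ‖u‖) := by
    gcongr
    exact linfty_opNorm_mulVec B u
  _ = Fintype.card m * ‖v‖ * ‖u‖ * ‖B‖ := by
    rw [Finset.sum_const, Finset.card_univ, nsmul_eq_mul]
    ring

end Matrix

theorem tendsto_log_linfty_opNorm_pow_div {d : ℕ} {A : Matrix (Fin d) (Fin d) ℝ}
    (hA : 0 < specRadius A) :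
    Tendsto (fun n : ℕ => Real.log ‖A ^ n‖ / n) atTop (𝓝 (Real.log (specRadius A))) := by
  have hpow (n : ℕ) : A.map Complex.ofReal ^ n = (A ^ n).map Complex.ofReal :=
    (Matrix.map_pow A Complex.ofRealHom n).symm
  simpa only [hpow, linfty_opNorm_map_ofReal] using
    tendsto_log_norm_pow_div hA (spectralRadius_map_ofReal A)

theorem stmt3_general {d : ℕ} (hd : 0 < d) (A : Matrix (Fin d) (Fin d) ℝ)
    (hA : ∀ i j, 0 < A i j)
    (u v : Fin d → ℝ) (hu : ∀ i, 0 < u i) (hv : ∀ i, 0 < v i) :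
    Tendsto (fun n : ℕ => Real.log (v ⬝ᵥ ((A ^ (n - 1)) *ᵥ u)) / (n : ℝ))
      atTop (nhds (Real.log (specRadius A))) := by
  have : Nonempty (Fin d) := ⟨⟨0, hd⟩⟩
  have hρ : 0 < specRadius A :=
    specRadius_pos_of_trace_ne_zero A (Finset.sum_pos (fun i _ => hA i i) Finset.univ_nonempty).ne'
  obtain ⟨i₀, hi₀⟩ := Finite.exists_min u
  obtain ⟨j₀, hj₀⟩ := Finite.exists_min v
  have hv_norm : 0 < ‖v‖ := (hv j₀).trans_le ((Real.le_norm_self _).trans (norm_le_pi_norm v j₀))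
  have hu_norm : 0 < ‖u‖ := (hu i₀).trans_le ((Real.le_norm_self _).trans (norm_le_pi_norm u i₀))
  exact tendsto_comp_sub_one_div_natCast <| tendsto_log_div_of_le_of_le
    (mul_pos (hv j₀) (hu i₀)) (by positivity) (fun n => dotProduct_pos hv (pow_mulVec_pos hA hu n))
    (fun n => mul_linfty_opNorm_le_dotProduct_mulVec (pow_apply_nonneg (fun i j => (hA i j).le) n)
      (hu i₀).le (hv j₀).le hj₀ hi₀)
    (fun n => dotProduct_mulVec_le _ _ _) (tendsto_log_linfty_opNorm_pow_div hρ)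

theorem stmt3 {d : ℕ} (hd : 0 < d) (A : Matrix (Fin d) (Fin d) ℝ)
    (hA : ∀ i j, 0 < A i j) (hρ : specRadius A < 1)
    (u v : Fin d → ℝ) (hu : ∀ i, 0 < u i) (hv : ∀ i, 0 < v i) :
    Tendsto (fun n : ℕ => Real.log (v ⬝ᵥ ((A ^ (n - 1)) *ᵥ u)) / (n : ℝ))
      atTop (nhds (Real.log (specRadius A))) :=
  stmt3_general hd A hA u v hu hv
end

section
/- Let A be a d×d matrix with strictly positive entries. Then the limit L = lim_{m→∞} (A/ρ(A))^m exists and L is a matrix with strictly positive entries; in particular, if additionally ρ(A) < 1 and u is an entrywise strictly positive vector, then the sequence of vectors (A/ρ(A))^{m} u converges to a strictly positive vector. -/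
/-!
Perron's theorem by Wielandt's argument: maximizing `t` subject to `t • x ≤ A x` over the
standard simplex yields an eigenvector `v > 0` of `A` with eigenvalue `r > 0`, and comparing
`|x|` with `v` shows that every complex eigenvalue has modulus at most `r`, so `r = ρ(A)`.
Conjugating `r⁻¹ • A` by `diagonal v` gives a positive row-stochastic matrix `P`; since every
row of `P` dominates `δ • 1` for some `δ > 0`, multiplication by `P` shrinks the oscillation
`max y - min y` of a vector by the factor `1 - dδ < 1` (Doeblin), so `P ^ m` converges to a
matrix with identical positive rows.
-/

open Matrix Filter

open Finset Set Topology

theorem mem_Icc_ciInf_ciSup {ι α : Type*} [Finite ι] [ConditionallyCompleteLattice α]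
    (y : ι → α) (j : ι) : y j ∈ Icc (⨅ i, y i) (⨆ i, y i) :=
  ⟨ciInf_le (finite_range y).bddBelow j, le_ciSup (finite_range y).bddAbove j⟩

theorem List.foldr_max_eq_of_mem {α : Type*} [LinearOrder α] {l : List α} {a b : α}
    (hb : b ≤ a) (ha : a ∈ l) (h : ∀ x ∈ l, x ≤ a) : l.foldr max b = a := by
  refine le_antisymm ?_ (le_max_of_le' b ha le_rfl)
  clear ha
  induction l with
  | nil => exact hb
  | cons c l ih => exact max_le (h c mem_cons_self) (ih fun x hx => h x (mem_cons_of_mem c hx))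

namespace Matrix

variable {ι : Type*} [Fintype ι]

theorem mulVec_pos_of_nonneg_of_ne_zero {A : Matrix ι ι ℝ} (hA : ∀ i j, 0 < A i j)
    {x : ι → ℝ} (hx : ∀ j, 0 ≤ x j) (hx0 : x ≠ 0) (i : ι) : 0 < (A *ᵥ x) i := by
  obtain ⟨j, hj⟩ := Function.ne_iff.1 hx0
  exact sum_pos' (fun k _ => mul_nonneg (hA i k).le (hx k))
    ⟨j, mem_univ j, mul_pos (hA i j) ((hx j).lt_of_ne' hj)⟩

theorem le_of_smul_le_mulVec {A : Matrix ι ι ℝ} (hA : ∀ i j, 0 ≤ A i j) {r : ℝ}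
    {v : ι → ℝ} (hv : ∀ i, 0 < v i) (hAv : A *ᵥ v = r • v) {t : ℝ} {y : ι → ℝ}
    (hy : ∀ i, 0 ≤ y i) (hy0 : y ≠ 0) (hty : ∀ i, t * y i ≤ (A *ᵥ y) i) : t ≤ r := by
  obtain ⟨j, hj⟩ := Function.ne_iff.1 hy0
  obtain ⟨i, -, hi⟩ := exists_max_image univ (fun k => y k / v k) ⟨j, mem_univ j⟩
  set c := y i / v i
  have hyc : ∀ k, y k ≤ c * v k := fun k => (div_le_iff₀ (hv k)).1 (hi k (mem_univ k))
  have hyi : 0 < y i := by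
    have : 0 < c := ((div_pos ((hy j).lt_of_ne' hj) (hv j))).trans_le (hi j (mem_univ j))
    simpa [c, hv i] using this
  refine le_of_mul_le_mul_right ?_ hyi
  calc t * y i ≤ (A *ᵥ y) i := hty i
    _ ≤ (A *ᵥ (c • v)) i :=
      sum_le_sum fun k _ => mul_le_mul_of_nonneg_left (by simpa using hyc k) (hA i k)
    _ = r * y i := by
      rw [mulVec_smul, hAv, Pi.smul_apply, Pi.smul_apply, smul_eq_mul, smul_eq_mul,
        mul_left_comm, div_mul_cancel₀ _ (hv i).ne']

theorem le_sum_of_smul_le_mulVec {A : Matrix ι ι ℝ} (hA : ∀ i j, 0 ≤ A i j) {t : ℝ}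
    {x : ι → ℝ} (hx : x ∈ stdSimplex ℝ ι) (htx : ∀ i, t * x i ≤ (A *ᵥ x) i) :
    t ≤ ∑ i, ∑ j, A i j :=
  calc t = ∑ i, t * x i := by rw [← mul_sum, hx.2, mul_one]
    _ ≤ ∑ i, (A *ᵥ x) i := sum_le_sum fun i _ => htx i
    _ ≤ ∑ i, ∑ j, A i j := sum_le_sum fun i _ => sum_le_sum fun j _ =>
      mul_le_of_le_one_right (hA i j) (mem_Icc_of_mem_stdSimplex hx j).2

theorem exists_gt_of_smul_le_mulVec {A : Matrix ι ι ℝ} (hA : ∀ i j, 0 < A i j) {t : ℝ}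
    {x : ι → ℝ} (hx : x ∈ stdSimplex ℝ ι) (htx : ∀ i, t * x i ≤ (A *ᵥ x) i)
    (hne : A *ᵥ x ≠ t • x) :
    ∃ t' > t, ∃ x' ∈ stdSimplex ℝ ι, ∀ i, t' * x' i ≤ (A *ᵥ x') i := by
  have hx0 : x ≠ 0 := by rintro rfl; simp [stdSimplex] at hx
  set y := A *ᵥ x
  have hy : ∀ i, 0 < y i := mulVec_pos_of_nonneg_of_ne_zero hA hx.1 hx0
  have : Nonempty ι := ⟨(Function.ne_iff.1 hx0).choose⟩
  -- `A x - t • x` is nonnegative and nonzero, so `A` maps it to a positive vector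
  have hgap : ∀ i, t * y i < (A *ᵥ y) i := by
    intro i
    have := mulVec_pos_of_nonneg_of_ne_zero hA (x := y - t • x)
      (fun j => by simpa using htx j) (sub_ne_zero.2 hne) i
    simpa [y, mulVec_sub, mulVec_smul] using this
  set s := ∑ i, y i
  have hs : 0 < s := sum_pos (fun i _ => hy i) univ_nonempty
  refine ⟨univ.inf' univ_nonempty fun i => (A *ᵥ y) i / y i,
    (lt_inf'_iff _).2 fun i _ => (lt_div_iff₀ (hy i)).2 (hgap i), s⁻¹ • y,
    ⟨fun i => mul_nonneg (inv_nonneg.2 hs.le) (hy i).le, by simp [← mul_sum, s, hs.ne']⟩,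
    fun i => ?_⟩
  rw [mulVec_smul, Pi.smul_apply, Pi.smul_apply, smul_eq_mul, smul_eq_mul, mul_left_comm]
  exact mul_le_mul_of_nonneg_left ((le_div_iff₀ (hy i)).1 (inf'_le _ (mem_univ i)))
    (inv_nonneg.2 hs.le)

theorem exists_pos_eigenvector_of_pos [Nonempty ι] {A : Matrix ι ι ℝ} (hA : ∀ i j, 0 < A i j) :
    ∃ r : ℝ, 0 < r ∧ ∃ v : ι → ℝ, (∀ i, 0 < v i) ∧ A *ᵥ v = r • v := by
  classical
  set S : Set (ℝ × (ι → ℝ)) := (Icc 0 (∑ i, ∑ j, A i j) ×ˢ stdSimplex ℝ ι) ∩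
    ⋂ i, {p | p.1 * p.2 i ≤ (A *ᵥ p.2) i}
  have hS : IsCompact S := (isCompact_Icc.prod (isCompact_stdSimplex ℝ ι)).inter_right <|
    isClosed_iInter fun i => isClosed_le (by fun_prop) (by fun_prop)
  obtain ⟨i₀⟩ := ‹Nonempty ι›
  have hS₀ : ((0 : ℝ), (Pi.single i₀ 1 : ι → ℝ)) ∈ S := by
    refine ⟨⟨⟨le_rfl, sum_nonneg fun i _ => sum_nonneg fun j _ => (hA i j).le⟩,
      single_mem_stdSimplex ℝ i₀⟩, mem_iInter.2 fun i => ?_⟩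
    simpa using (hA i i₀).le
  obtain ⟨⟨r, x⟩, ⟨⟨⟨hr, -⟩, hx⟩, hrx⟩, hmax⟩ :=
    hS.exists_isMaxOn ⟨_, hS₀⟩ continuous_fst.continuousOn
  replace hrx : ∀ i, r * x i ≤ (A *ᵥ x) i := mem_iInter.1 hrx
  have hAx : A *ᵥ x = r • x := by
    by_contra hne
    obtain ⟨t, ht, y, hy, hty⟩ := exists_gt_of_smul_le_mulVec hA hx hrx hne
    have hty' : (t, y) ∈ S := ⟨⟨⟨hr.trans ht.le,
      le_sum_of_smul_le_mulVec (fun i j => (hA i j).le) hy hty⟩, hy⟩, mem_iInter.2 hty⟩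
    exact ht.not_ge (hmax hty')
  have hx0 : x ≠ 0 := by rintro rfl; simp [stdSimplex] at hx
  have hpos : ∀ i, 0 < r * x i := fun i => by
    simpa [hAx] using mulVec_pos_of_nonneg_of_ne_zero hA hx.1 hx0 i
  exact ⟨r, pos_of_mul_pos_left (hpos i₀) (hx.1 i₀), x,
    fun i => pos_of_mul_pos_right (hpos i) hr, hAx⟩

section RowStochastic

variable [DecidableEq ι] {P : Matrix ι ι ℝ}

theorem mulVec_mem_Icc_of_mem_rowStochastic (hP : P ∈ rowStochastic ℝ ι) {δ : ℝ}
    (hδ : ∀ i j, δ ≤ P i j) {y : ι → ℝ} {a b : ℝ} (hy : ∀ j, y j ∈ Icc a b) (i : ι) :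
    (P *ᵥ y) i ∈ Icc (δ * ∑ j, y j + (1 - Fintype.card ι * δ) * a)
      (δ * ∑ j, y j + (1 - Fintype.card ι * δ) * b) := by
  -- split off the uniform part `δ` of row `i`
  have hrest : ∑ j, (P i j - δ) = 1 - Fintype.card ι * δ := by
    simp [sum_sub_distrib, sum_row_of_mem_rowStochastic hP i]
  have hPy : (P *ᵥ y) i = δ * ∑ j, y j + ∑ j, (P i j - δ) * y j := by
    simp only [mulVec, dotProduct, mul_sum, ← sum_add_distrib]
    exact sum_congr rfl fun j _ => by ring
  rw [hPy, ← hrest, sum_mul, sum_mul]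
  exact ⟨add_le_add_right (sum_le_sum fun j _ =>
      mul_le_mul_of_nonneg_left (hy j).1 (sub_nonneg.2 (hδ i j))) _,
    add_le_add_right (sum_le_sum fun j _ =>
      mul_le_mul_of_nonneg_left (hy j).2 (sub_nonneg.2 (hδ i j))) _⟩

variable [Nonempty ι]

theorem ciInf_le_ciInf_mulVec_of_mem_rowStochastic (hP : P ∈ rowStochastic ℝ ι)
    (y : ι → ℝ) : ⨅ i, y i ≤ ⨅ i, (P *ᵥ y) i :=
  le_ciInf fun i => by
    simpa using (mulVec_mem_Icc_of_mem_rowStochastic hP (fun _ _ => nonneg_of_mem_rowStochastic hP)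
      (mem_Icc_ciInf_ciSup y) i).1

theorem ciSup_mulVec_le_ciSup_of_mem_rowStochastic (hP : P ∈ rowStochastic ℝ ι)
    (y : ι → ℝ) : ⨆ i, (P *ᵥ y) i ≤ ⨆ i, y i :=
  ciSup_le fun i => by
    simpa using (mulVec_mem_Icc_of_mem_rowStochastic hP (fun _ _ => nonneg_of_mem_rowStochastic hP)
      (mem_Icc_ciInf_ciSup y) i).2

theorem ciSup_sub_ciInf_mulVec_le_of_mem_rowStochastic (hP : P ∈ rowStochastic ℝ ι) {δ : ℝ}
    (hδ : ∀ i j, δ ≤ P i j) (y : ι → ℝ) :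
    (⨆ i, (P *ᵥ y) i) - ⨅ i, (P *ᵥ y) i ≤
      (1 - Fintype.card ι * δ) * ((⨆ i, y i) - ⨅ i, y i) := by
  have h := mulVec_mem_Icc_of_mem_rowStochastic hP hδ (mem_Icc_ciInf_ciSup y)
  have hsup := ciSup_le fun i => (h i).2
  have hinf := le_ciInf fun i => (h i).1
  linarith

theorem exists_tendsto_pow_mulVec_of_mem_rowStochastic (hP : P ∈ rowStochastic ℝ ι) {δ : ℝ}
    (hδ₀ : 0 < δ) (hδ : ∀ i j, δ ≤ P i j) (y : ι → ℝ) :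
    ∃ μ, ⨅ i, (P *ᵥ y) i ≤ μ ∧ Tendsto (fun m : ℕ => (P ^ m) *ᵥ y) atTop (𝓝 fun _ => μ) := by
  set c := 1 - Fintype.card ι * δ
  obtain ⟨i₀⟩ := ‹Nonempty ι›
  have hc₀ : 0 ≤ c := by
    have := Finset.sum_le_sum fun j (_ : j ∈ Finset.univ) => hδ i₀ j
    rw [sum_row_of_mem_rowStochastic hP, sum_const, card_univ, nsmul_eq_mul] at this
    linarith
  have hc₁ : c < 1 := by
    have : (0 : ℝ) < Fintype.card ι := Nat.cast_pos.2 Fintype.card_pos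
    simp only [c]; nlinarith
  set z : ℕ → ι → ℝ := fun m => (P ^ m) *ᵥ y
  have hz : ∀ m, z (m + 1) = P *ᵥ z m := fun m => by simp [z, pow_succ', mulVec_mulVec]
  set lo : ℕ → ℝ := fun m => ⨅ i, z m i
  set hi : ℕ → ℝ := fun m => ⨆ i, z m i
  have hlo : Monotone lo := monotone_nat_of_le_succ fun m => by
    simpa only [lo, hz] using ciInf_le_ciInf_mulVec_of_mem_rowStochastic hP (z m)
  have hhi : Antitone hi := antitone_nat_of_succ_le fun m => by
    simpa only [hi, hz] using ciSup_mulVec_le_ciSup_of_mem_rowStochastic hP (z m)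
  have hgap : ∀ m, hi m - lo m ≤ c ^ m * (hi 0 - lo 0) := by
    intro m
    induction m with
    | zero => simp
    | succ m ih =>
      calc hi (m + 1) - lo (m + 1) ≤ c * (hi m - lo m) := by
            simpa only [hi, lo, hz] using
              ciSup_sub_ciInf_mulVec_le_of_mem_rowStochastic hP hδ (z m)
        _ ≤ c ^ (m + 1) * (hi 0 - lo 0) := by
            rw [pow_succ', mul_assoc]; exact mul_le_mul_of_nonneg_left ih hc₀
  have hbdd : BddAbove (range lo) := ⟨hi 0, forall_mem_range.2 fun m =>
    ((mem_Icc_ciInf_ciSup (z m) i₀).1.trans (mem_Icc_ciInf_ciSup (z m) i₀).2).trans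
      (hhi (Nat.zero_le m))⟩
  have hlim := tendsto_atTop_ciSup hlo hbdd
  refine ⟨⨆ m, lo m, by simpa [lo, z] using le_ciSup hbdd 1, tendsto_pi_nhds.2 fun i => ?_⟩
  have hupper : Tendsto (fun m => lo m + c ^ m * (hi 0 - lo 0)) atTop (𝓝 (⨆ m, lo m)) := by
    simpa using hlim.add ((tendsto_pow_atTop_nhds_zero_of_lt_one hc₀ hc₁).mul_const (hi 0 - lo 0))
  refine tendsto_of_tendsto_of_tendsto_of_le_of_le hlim hupper
    (fun m => (mem_Icc_ciInf_ciSup (z m) i).1) fun m => ?_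
  linarith [(mem_Icc_ciInf_ciSup (z m) i).2, hgap m]

theorem exists_tendsto_pow_of_mem_rowStochastic_of_pos (hP : P ∈ rowStochastic ℝ ι)
    (hpos : ∀ i j, 0 < P i j) :
    ∃ μ : ι → ℝ, (∀ j, 0 < μ j) ∧ Tendsto (fun m : ℕ => P ^ m) atTop (𝓝 (of fun _ j => μ j)) := by
  obtain ⟨⟨i₀, j₀⟩, hmin⟩ := Finite.exists_min fun p : ι × ι => P p.1 p.2
  have hcol : ∀ j, ∃ μ, 0 < μ ∧ Tendsto (fun m : ℕ => (P ^ m) *ᵥ Pi.single j 1) atTop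
      (𝓝 fun _ => μ) := by
    intro j
    obtain ⟨μ, hμ, hlim⟩ := exists_tendsto_pow_mulVec_of_mem_rowStochastic hP (hpos i₀ j₀)
      (fun i j => hmin ⟨i, j⟩) (Pi.single j 1)
    obtain ⟨i, hi⟩ := exists_eq_ciInf_of_finite (f := fun i => (P *ᵥ Pi.single j 1) i)
    refine ⟨μ, ?_, hlim⟩
    rw [← hi, mulVec_single_one] at hμ
    exact (hpos i j).trans_le hμ
  choose μ hμ hlim using hcol
  refine ⟨μ, hμ, tendsto_pi_nhds.2 fun i => tendsto_pi_nhds.2 fun j => ?_⟩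
  simpa using tendsto_pi_nhds.1 (hlim j) i

end RowStochastic

theorem isRoot_charpoly_iff_exists_mulVec_eq_smul {K : Type*} [Field K] [DecidableEq ι]
    (M : Matrix ι ι K) (z : K) : M.charpoly.IsRoot z ↔ ∃ x, x ≠ 0 ∧ M *ᵥ x = z • x := by
  rw [Polynomial.IsRoot, eval_charpoly, ← exists_mulVec_eq_zero_iff]
  simp [sub_mulVec, sub_eq_zero, eq_comm]

theorem norm_mul_norm_le_mulVec_norm {A : Matrix ι ι ℝ} (hA : ∀ i j, 0 ≤ A i j) {x : ι → ℂ}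
    {z : ℂ} (hx : A.map Complex.ofReal *ᵥ x = z • x) (i : ι) :
    ‖z‖ * ‖x i‖ ≤ (A *ᵥ fun j => ‖x j‖) i :=
  calc ‖z‖ * ‖x i‖ = ‖∑ j, (A i j : ℂ) * x j‖ := by
        rw [← norm_mul, ← smul_eq_mul, ← Pi.smul_apply, ← hx]; rfl
    _ ≤ (A *ᵥ fun j => ‖x j‖) i := (norm_sum_le _ _).trans_eq <| sum_congr rfl fun j _ => by
        rw [norm_mul, Complex.norm_real, Real.norm_of_nonneg (hA i j)]

theorem norm_le_of_isRoot_charpoly {A : Matrix ι ι ℝ} [DecidableEq ι] (hA : ∀ i j, 0 ≤ A i j)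
    {r : ℝ} {v : ι → ℝ} (hv : ∀ i, 0 < v i) (hAv : A *ᵥ v = r • v) {z : ℂ}
    (hz : (A.map Complex.ofReal).charpoly.IsRoot z) : ‖z‖ ≤ r := by
  obtain ⟨x, hx0, hx⟩ := (isRoot_charpoly_iff_exists_mulVec_eq_smul _ z).1 hz
  refine le_of_smul_le_mulVec hA hv hAv (fun i => norm_nonneg (x i)) ?_
    (norm_mul_norm_le_mulVec_norm hA hx)
  obtain ⟨i, hi⟩ := Function.ne_iff.1 hx0
  exact Function.ne_iff.2 ⟨i, norm_ne_zero_iff.2 hi⟩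

theorem exists_tendsto_inv_smul_pow_of_pos_eigenvector [DecidableEq ι] [Nonempty ι]
    {A : Matrix ι ι ℝ} (hA : ∀ i j, 0 < A i j) {r : ℝ} (hr : 0 < r) {v : ι → ℝ}
    (hv : ∀ i, 0 < v i) (hAv : A *ᵥ v = r • v) :
    ∃ L : Matrix ι ι ℝ, Tendsto (fun m : ℕ => (r⁻¹ • A) ^ m) atTop (𝓝 L) ∧ ∀ i j, 0 < L i j := by
  have hv₀ : ∀ i, v i ≠ 0 := fun i => (hv i).ne'
  set D := diagonal v
  set D' := diagonal v⁻¹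
  have hDD' : D * D' = 1 := by simp [D, D', hv₀]
  set P := D' * (r⁻¹ • A) * D
  have hPij : ∀ i j, P i j = (v i)⁻¹ * (r⁻¹ * A i j) * v j := fun i j => by
    simp only [P, D, D', diagonal_mul, mul_diagonal, smul_apply, smul_eq_mul, Pi.inv_apply]
  have hPpos : ∀ i j, 0 < P i j := fun i j => by
    rw [hPij]; have := hv i; have := hv j; have := hA i j; positivity
  have hP : P ∈ rowStochastic ℝ ι := by
    refine mem_rowStochastic.2 ⟨fun i j => (hPpos i j).le, ?_⟩
    calc P *ᵥ 1 = D' *ᵥ ((r⁻¹ • A) *ᵥ (D *ᵥ 1)) := by simp only [P, mulVec_mulVec, mul_assoc]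
      _ = D' *ᵥ v := by
        rw [show D *ᵥ 1 = v by ext; simp [D, mulVec_diagonal], smul_mulVec, hAv, smul_smul,
          inv_mul_cancel₀ hr.ne', one_smul]
      _ = 1 := by ext i; simp [D', mulVec_diagonal, hv₀]
  obtain ⟨μ, hμ, hlim⟩ := exists_tendsto_pow_of_mem_rowStochastic_of_pos hP hPpos
  have hsemi : SemiconjBy D P (r⁻¹ • A) := by simp only [SemiconjBy, P, ← mul_assoc, hDD', one_mul]
  have hpow : ∀ m : ℕ, (r⁻¹ • A) ^ m = D * P ^ m * D' := fun m =>
    calc (r⁻¹ • A) ^ m = (r⁻¹ • A) ^ m * D * D' := by rw [mul_assoc, hDD', mul_one]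
      _ = D * P ^ m * D' := by rw [(hsemi.pow_right m).eq]
  refine ⟨D * of (fun _ j => μ j) * D', ?_, fun i j => ?_⟩
  · simp_rw [hpow]
    exact (hlim.const_mul D).mul_const D'
  · have := hv i; have := hv j; have := hμ j
    simp only [D, D', diagonal_mul, mul_diagonal, of_apply, Pi.inv_apply]
    positivity

end Matrix

theorem specRadius_eq_of_pos_eigenvector {n : ℕ} [Nonempty (Fin n)] {A : Matrix (Fin n) (Fin n) ℝ}
    (hA : ∀ i j, 0 ≤ A i j) {r : ℝ} (hr : 0 ≤ r) {v : Fin n → ℝ} (hv : ∀ i, 0 < v i)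
    (hAv : A *ᵥ v = r • v) : specRadius A = r := by
  have hroot : (A.map Complex.ofReal).charpoly.IsRoot r := by
    refine (isRoot_charpoly_iff_exists_mulVec_eq_smul _ _).2 ⟨fun i => v i, ?_, ?_⟩
    · obtain ⟨i⟩ := ‹Nonempty (Fin n)›
      exact Function.ne_iff.2 ⟨i, Complex.ofReal_ne_zero.2 (hv i).ne'⟩
    · ext i
      simpa [mulVec, dotProduct] using congr_arg Complex.ofReal (congr_fun hAv i)
  refine List.foldr_max_eq_of_mem hr ?_ fun x hx => ?_
  · rw [Multiset.mem_toList, Multiset.mem_map]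
    exact ⟨r, (Polynomial.mem_roots (charpoly_monic _).ne_zero).2 hroot, by simp [hr]⟩
  · obtain ⟨z, hz, rfl⟩ := Multiset.mem_map.1 (Multiset.mem_toList.1 hx)
    exact norm_le_of_isRoot_charpoly hA hv hAv (Polynomial.isRoot_of_mem_roots hz)

theorem stmt5 {d : ℕ} (hd : 0 < d) (A : Matrix (Fin d) (Fin d) ℝ)
    (hA : ∀ i j, 0 < A i j) :
    (∃ L : Matrix (Fin d) (Fin d) ℝ,
      Tendsto (fun m : ℕ => ((specRadius A)⁻¹ • A) ^ m) atTop (nhds L) ∧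
      ∀ i j, 0 < L i j) ∧
    (specRadius A < 1 → ∀ u : Fin d → ℝ, (∀ i, 0 < u i) →
      ∃ w : Fin d → ℝ,
        Tendsto (fun m : ℕ => (((specRadius A)⁻¹ • A) ^ m) *ᵥ u) atTop (nhds w) ∧
        ∀ i, 0 < w i) := by
  have : Nonempty (Fin d) := ⟨⟨0, hd⟩⟩
  obtain ⟨r, hr, v, hv, hAv⟩ := exists_pos_eigenvector_of_pos hA
  rw [specRadius_eq_of_pos_eigenvector (fun i j => (hA i j).le) hr.le hv hAv]
  obtain ⟨L, hL, hLpos⟩ := exists_tendsto_inv_smul_pow_of_pos_eigenvector hA hr hv hAv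
  refine ⟨⟨L, hL, hLpos⟩, fun _ u hu => ⟨L *ᵥ u, ?_, fun i => ?_⟩⟩
  · exact ((continuous_id.matrix_mulVec continuous_const).tendsto L).comp hL
  · exact sum_pos (fun j _ => mul_pos (hLpos i j) (hu j)) univ_nonempty
end

section
/- Let (X_n) be a Markov chain on a countable state space S with transition kernel p, let L ⊆ S be finite, and suppose the chain starts with an initial distribution μ̆ supported on L that is invariant for the censored (watched) chain on L, i.e., μ̆ P^{(L)} = μ̆ where P^{(L)}(i,j) = P_i(X_{T_L⁺} = j) for i, j ∈ L, and suppose P_{μ̆}(T_L⁺ < ∞) = 1. Then the measure ν̄ on S defined by ν̄(s) = E_{μ̆}[∑_{m=0}^{T_L⁺ − 1} 1{X_m = s}] is a stationary measure: ∑_{s} ν̄(s) p(s, t) = ν̄(t) for all t ∈ S. -/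
open MeasureTheory

/-- A time-homogeneous Markov chain on a countable state space `S`, given by a
transition kernel `p` and, for each starting state `x`, the law `ℙ x` of the
trajectory `(X_n)` on path space `ℕ → S`. -/
structure MarkovChain (S : Type*) [Countable S] [MeasurableSpace S] where
  /-- transition probabilities -/
  p : S → S → ENNReal
  p_sum : ∀ s, ∑' t, p s t = 1
  /-- law of the chain started at `x` -/
  ℙ : S → Measure (ℕ → S)
  prob : ∀ x, IsProbabilityMeasure (ℙ x)
  init : ∀ x, ℙ x {ω | ω 0 = x} = 1
  step : ∀ (x : S) (n : ℕ) (f : ℕ → S),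
    ℙ x {ω | ∀ i ≤ n + 1, ω i = f i} =
      ℙ x {ω | ∀ i ≤ n, ω i = f i} * p (f n) (f (n + 1))

/-!
Write `ν̄ t = ∑ₘ Vₘ t`, where `Vₘ t` is the `μ̆`-probability that `X_m = t` and the chain has not
visited `L` at times `1, …, m`. That avoidance event depends only on `X_0, …, X_m`, so the
Markov property at time `m` gives `∑ₛ Vₘ s p(s, t) = P_μ̆(X_{m+1} = t, X_1, …, X_m ∉ L)`.
For `t ∉ L` this is `V_{m+1} t`, and `V₀ t = μ̆ t = 0`, so summing over `m` gives `ν̄ t`.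
For `t ∈ L` every `V_{m+1} t` vanishes, while the sum over `m` is
`P_μ̆(X_{T_L⁺} = t) = (μ̆ P^{(L)}) t = μ̆ t = V₀ t`.
-/

open scoped ENNReal

section

variable {S : Type*}

def pathPrefix (n : ℕ) (ω : ℕ → S) : Fin (n + 1) → S := fun i => ω i

theorem setOf_forall_le_eq_preimage_pathPrefix (n : ℕ) (f : ℕ → S) :
    {ω : ℕ → S | ∀ i ≤ n, ω i = f i} = pathPrefix n ⁻¹' {pathPrefix n f} := by
  ext ω
  simp [pathPrefix, funext_iff, Fin.forall_iff]

theorem eval_eq_inter_preimage_pathPrefix_eq_empty {n : ℕ} {v : Fin (n + 1) → S} {u : S}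
    (hu : u ≠ v (Fin.last n)) : {ω : ℕ → S | ω n = u} ∩ pathPrefix n ⁻¹' {v} = ∅ := by
  refine Set.eq_empty_of_forall_notMem fun ω ⟨hωu, hωv⟩ => hu ?_
  rw [← hωu, ← Set.mem_singleton_iff.1 hωv]
  rfl

section Measurability

variable [MeasurableSpace S]

theorem measurable_pathPrefix (n : ℕ) : Measurable (pathPrefix (S := S) n) :=
  measurable_pi_lambda _ fun i => measurable_pi_apply (i : ℕ)

theorem measurableSet_eval_eq [MeasurableSingletonClass S] (n : ℕ) (t : S) :
    MeasurableSet {ω : ℕ → S | ω n = t} :=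
  (measurableSet_singleton t).preimage (measurable_pi_apply n)

variable [Countable S] [MeasurableSingletonClass S]

theorem measurableSet_preimage_pathPrefix (n : ℕ) (B : Set (Fin (n + 1) → S)) :
    MeasurableSet (pathPrefix n ⁻¹' B) :=
  measurable_pathPrefix n B.to_countable.measurableSet

theorem measure_eq_tsum_inter_preimage_pathPrefix (μ : Measure (ℕ → S)) (n : ℕ)
    (E : Set (ℕ → S)) : μ E = ∑' v, μ (E ∩ pathPrefix n ⁻¹' {v}) := by
  have := tsum_measure_preimage_singleton (μ := μ.restrict E) Set.countable_univ
    (f := pathPrefix n) fun v _ => measurableSet_preimage_pathPrefix n {v}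
  rw [tsum_univ (f := fun v => μ.restrict E (pathPrefix n ⁻¹' {v})), Set.preimage_univ,
    Measure.restrict_apply_univ] at this
  rw [← this]
  exact tsum_congr fun v => by
    rw [Measure.restrict_apply (measurableSet_preimage_pathPrefix n {v}), Set.inter_comm]

theorem measure_eval_succ_eq_tsum {μ : Measure (ℕ → S)} {p : S → S → ℝ≥0∞} {n : ℕ}
    (h : ∀ v t, μ (pathPrefix n ⁻¹' {v} ∩ {ω | ω (n + 1) = t}) =
      μ (pathPrefix n ⁻¹' {v}) * p (v (Fin.last n)) t) (t : S) :
    μ {ω | ω (n + 1) = t} = ∑' u, μ {ω | ω n = u} * p u t := by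
  have hfiber : ∀ v, ∑' u, μ ({ω | ω n = u} ∩ pathPrefix n ⁻¹' {v}) * p u t =
      μ (pathPrefix n ⁻¹' {v}) * p (v (Fin.last n)) t := by
    intro v
    rw [tsum_eq_single (v (Fin.last n)) fun u hu => by
      rw [eval_eq_inter_preimage_pathPrefix_eq_empty hu, measure_empty, zero_mul]]
    congr 2
    refine Set.inter_eq_right.2 fun ω hω => ?_
    exact congrFun (Set.mem_singleton_iff.1 hω) (Fin.last n)
  calc μ {ω | ω (n + 1) = t}
      = ∑' v, μ (pathPrefix n ⁻¹' {v} ∩ {ω | ω (n + 1) = t}) := by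
        rw [measure_eq_tsum_inter_preimage_pathPrefix μ n]
        simp only [Set.inter_comm]
    _ = ∑' v, ∑' u, μ ({ω | ω n = u} ∩ pathPrefix n ⁻¹' {v}) * p u t := by
        simp only [h, hfiber]
    _ = ∑' u, μ {ω | ω n = u} * p u t := by
        rw [ENNReal.tsum_comm]
        simp only [ENNReal.tsum_mul_right, ← measure_eq_tsum_inter_preimage_pathPrefix]

end Measurability

def avoidsUpTo (L : Set S) (m : ℕ) : Set (ℕ → S) := {ω | ∀ k, 1 ≤ k → k ≤ m → ω k ∉ L}

theorem avoidsUpTo_eq_preimage_pathPrefix (L : Set S) (m : ℕ) :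
    avoidsUpTo L m = pathPrefix m ⁻¹' {v | ∀ k : Fin (m + 1), 1 ≤ (k : ℕ) → v k ∉ L} := by
  ext ω
  simp only [avoidsUpTo, pathPrefix, Set.mem_preimage, Set.mem_ofPred_eq, Fin.forall_iff,
    Nat.lt_succ_iff]
  exact ⟨fun h k hk hk1 => h k hk1 hk, fun h k hk1 hk => h k hk hk1⟩

theorem avoidsUpTo_zero (L : Set S) : avoidsUpTo L 0 = Set.univ :=
  Set.eq_univ_of_forall fun _ k hk1 hk0 => absurd (hk1.trans hk0) (by decide)

theorem eval_eq_inter_avoidsUpTo_eq_empty {L : Set S} {t : S} (ht : t ∈ L) {m : ℕ}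
    (hm : 1 ≤ m) : {ω : ℕ → S | ω m = t} ∩ avoidsUpTo L m = ∅ :=
  Set.eq_empty_of_forall_notMem fun _ ⟨hωt, hω⟩ => hω m hm le_rfl (hωt ▸ ht)

theorem eval_succ_inter_avoidsUpTo_succ {L : Set S} {t : S} (ht : t ∉ L) (m : ℕ) :
    {ω : ℕ → S | ω (m + 1) = t} ∩ avoidsUpTo L (m + 1) =
      {ω | ω (m + 1) = t} ∩ avoidsUpTo L m := by
  ext ω
  simp only [avoidsUpTo, Set.mem_inter_iff, Set.mem_ofPred_eq, and_congr_right_iff]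
  rintro rfl
  refine ⟨fun h k hk1 hk => h k hk1 (hk.trans m.le_succ), fun h k hk1 hk => ?_⟩
  rcases Nat.le_succ_iff.1 hk with hk | rfl
  exacts [h k hk1 hk, ht]

theorem setOf_firstHit_eq_iUnion (L : Set S) (t : S) :
    {ω : ℕ → S | ∃ n : ℕ, 1 ≤ n ∧ ω n = t ∧ ∀ k, 1 ≤ k → k < n → ω k ∉ L} =
      ⋃ m, {ω | ω (m + 1) = t} ∩ avoidsUpTo L m := by
  ext ω
  simp only [avoidsUpTo, Set.mem_ofPred_eq, Set.mem_iUnion, Set.mem_inter_iff]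
  constructor
  · rintro ⟨n, hn, hωt, hω⟩
    obtain ⟨n, rfl⟩ := Nat.exists_eq_add_of_le' hn
    exact ⟨n, hωt, fun k hk1 hk => hω k hk1 (Nat.lt_succ_of_le hk)⟩
  · rintro ⟨m, hωt, hω⟩
    exact ⟨m + 1, m.succ_pos, hωt, fun k hk1 hk => hω k hk1 (Nat.le_of_lt_succ hk)⟩

theorem pairwise_disjoint_eval_succ_inter_avoidsUpTo {L : Set S} {t : S} (ht : t ∈ L) :
    Pairwise (Function.onFun Disjoint
      fun m => {ω : ℕ → S | ω (m + 1) = t} ∩ avoidsUpTo L m) := by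
  refine (pairwise_disjoint_on _).2 fun m n hmn => Set.disjoint_left.2 ?_
  rintro ω ⟨hωt, -⟩ ⟨-, hω⟩
  exact hω (m + 1) m.succ_pos hmn (hωt ▸ ht)

namespace MarkovChain

variable [Countable S] [MeasurableSpace S] (M : MarkovChain S)

theorem measure_preimage_pathPrefix_inter_eval_succ (x : S) {n : ℕ} (v : Fin (n + 1) → S)
    (t : S) : M.ℙ x (pathPrefix n ⁻¹' {v} ∩ {ω | ω (n + 1) = t}) =
      M.ℙ x (pathPrefix n ⁻¹' {v}) * M.p (v (Fin.last n)) t := by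
  set f : ℕ → S := fun i => if h : i < n + 1 then v ⟨i, h⟩ else t
  have hv : pathPrefix n f = v :=
    funext fun i => by simp only [f, pathPrefix, dif_pos i.isLt, Fin.eta]
  have hcyl : {ω : ℕ → S | ∀ i ≤ n + 1, ω i = f i} =
      pathPrefix n ⁻¹' {v} ∩ {ω | ω (n + 1) = t} := by
    rw [← hv, ← setOf_forall_le_eq_preimage_pathPrefix]
    ext ω
    simp only [Nat.le_succ_iff, or_imp, forall_and, forall_eq]
    simp [f]
  have := M.step x n f
  rw [hcyl, setOf_forall_le_eq_preimage_pathPrefix, hv] at this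
  simpa [f, Fin.last] using this

noncomputable def excursionVisits (μ : S → ℝ≥0∞) (L : Set S) (m : ℕ) (t : S) : ℝ≥0∞ :=
  ∑' s, μ s * M.ℙ s ({ω | ω m = t} ∩ avoidsUpTo L m)

section

variable {M} {μ : S → ℝ≥0∞} {L : Set S} {t : S}

theorem excursionVisits_succ_of_mem (ht : t ∈ L) (m : ℕ) :
    M.excursionVisits μ L (m + 1) t = 0 := by
  simp [excursionVisits, eval_eq_inter_avoidsUpTo_eq_empty ht m.succ_pos]

theorem excursionVisits_succ_of_notMem (ht : t ∉ L) (m : ℕ) :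
    M.excursionVisits μ L (m + 1) t =
      ∑' s, μ s * M.ℙ s ({ω | ω (m + 1) = t} ∩ avoidsUpTo L m) := by
  simp only [excursionVisits, eval_succ_inter_avoidsUpTo_succ ht]

end

variable [MeasurableSingletonClass S]

theorem measure_eval_succ_inter_preimage_pathPrefix (x : S) {n : ℕ} (B : Set (Fin (n + 1) → S))
    (t : S) : M.ℙ x ({ω | ω (n + 1) = t} ∩ pathPrefix n ⁻¹' B) =
      ∑' u, M.ℙ x ({ω | ω n = u} ∩ pathPrefix n ⁻¹' B) * M.p u t := by
  have hB := measurableSet_preimage_pathPrefix n B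
  simp only [← Measure.restrict_apply' hB]
  refine measure_eval_succ_eq_tsum (fun v s => ?_) t
  simp only [Measure.restrict_apply' hB, Set.inter_right_comm _ {ω : ℕ → S | ω (n + 1) = s},
    ← Set.preimage_inter]
  by_cases hv : v ∈ B
  · rw [Set.singleton_inter_of_mem hv, M.measure_preimage_pathPrefix_inter_eval_succ]
  · simp [Set.singleton_inter_eq_empty.2 hv]

theorem measure_eval_zero_eq_zero_of_ne {x t : S} (h : t ≠ x) : M.ℙ x {ω | ω 0 = t} = 0 := by
  have := M.prob x
  refine measure_mono_null (fun ω hωt hωx => h (hωt.symm.trans hωx)) ?_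
  exact (prob_compl_eq_zero_iff (measurableSet_eval_eq 0 x)).2 (M.init x)

theorem tsum_measure_eval_succ_inter_avoidsUpTo {L : Set S} {t : S} (ht : t ∈ L) (x : S) :
    ∑' m, M.ℙ x ({ω | ω (m + 1) = t} ∩ avoidsUpTo L m) =
      M.ℙ x {ω | ∃ n : ℕ, 1 ≤ n ∧ ω n = t ∧ ∀ k, 1 ≤ k → k < n → ω k ∉ L} := by
  rw [setOf_firstHit_eq_iUnion, measure_iUnion (pairwise_disjoint_eval_succ_inter_avoidsUpTo ht)]
  intro m
  rw [avoidsUpTo_eq_preimage_pathPrefix]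
  exact (measurableSet_eval_eq _ t).inter (measurableSet_preimage_pathPrefix m _)

variable {M} {μ : S → ℝ≥0∞} {L : Set S} {t : S}

theorem excursionVisits_zero : M.excursionVisits μ L 0 t = μ t := by
  rw [excursionVisits, avoidsUpTo_zero, tsum_eq_single t fun x hx => ?_]
  · simp [M.init]
  · simp [M.measure_eval_zero_eq_zero_of_ne (Ne.symm hx)]

theorem tsum_excursionVisits_mul_p (m : ℕ) :
    ∑' s, M.excursionVisits μ L m s * M.p s t =
      ∑' x, μ x * M.ℙ x ({ω | ω (m + 1) = t} ∩ avoidsUpTo L m) := by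
  simp only [excursionVisits, ← ENNReal.tsum_mul_right]
  rw [ENNReal.tsum_comm]
  refine tsum_congr fun x => ?_
  rw [avoidsUpTo_eq_preimage_pathPrefix, M.measure_eval_succ_inter_preimage_pathPrefix,
    ← ENNReal.tsum_mul_left]
  simp only [mul_assoc]

theorem tsum_tsum_excursionVisits_mul_p :
    ∑' s, (∑' m, M.excursionVisits μ L m s) * M.p s t =
      ∑' m, ∑' x, μ x * M.ℙ x ({ω | ω (m + 1) = t} ∩ avoidsUpTo L m) := by
  simp only [← ENNReal.tsum_mul_right]
  rw [ENNReal.tsum_comm]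
  exact tsum_congr tsum_excursionVisits_mul_p

end MarkovChain

end

theorem stmt8_general {S : Type*} [Countable S] [MeasurableSpace S] [MeasurableSingletonClass S]
    (M : MarkovChain S) (L : Set S)
    (μ : S → ENNReal) (hμL : ∀ s, s ∉ L → μ s = 0)
    -- the censored kernel on L
    (PL : S → S → ENNReal)
    (hPL : ∀ i j : S, PL i j =
      M.ℙ i {ω | ∃ n : ℕ, 1 ≤ n ∧ ω n = j ∧ ∀ k, 1 ≤ k → k < n → ω k ∉ L})
    -- μ is invariant for the censored chain on L
    (hinv : ∀ j ∈ L, (∑' i, μ i * PL i j) = μ j)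
    -- the occupation measure of one excursion
    (ν : S → ENNReal)
    (hν : ∀ t, ν t = ∑' m : ℕ, ∑' s, μ s *
      M.ℙ s {ω | ω m = t ∧ ∀ k, 1 ≤ k → k ≤ m → ω k ∉ L}) :
    ∀ t : S, (∑' s, ν s * M.p s t) = ν t := by
  intro t
  simp only [show ∀ s, ν s = ∑' m, M.excursionVisits μ L m s from hν]
  rw [MarkovChain.tsum_tsum_excursionVisits_mul_p,
    tsum_eq_zero_add' (f := fun m => M.excursionVisits μ L m t) ENNReal.summable,
    MarkovChain.excursionVisits_zero]
  by_cases ht : t ∈ L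
  · simp only [MarkovChain.excursionVisits_succ_of_mem ht, tsum_zero, add_zero]
    rw [ENNReal.tsum_comm]
    simp only [ENNReal.tsum_mul_left, M.tsum_measure_eval_succ_inter_avoidsUpTo ht, ← hPL]
    exact hinv t ht
  · simp only [hμL t ht, zero_add, MarkovChain.excursionVisits_succ_of_notMem ht]

/-- Cycle trick: if the chain starts from a distribution `μ` on the finite set `L`
that is invariant for the censored (watched) chain on `L`, and the return time to
`L` is a.s. finite, then the expected occupation measure over one excursion,
`ν̄(t) = E_μ[∑_{m=0}^{T_L⁺ - 1} 1{X_m = t}]`, is a stationary measure. -/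
theorem stmt8 {S : Type*} [Countable S] [MeasurableSpace S] [MeasurableSingletonClass S]
    (M : MarkovChain S) (L : Set S) (hLfin : L.Finite)
    (μ : S → ENNReal) (hμL : ∀ s, s ∉ L → μ s = 0) (hμ1 : ∑' s, μ s = 1)
    -- the censored kernel on L
    (PL : S → S → ENNReal)
    (hPL : ∀ i j : S, PL i j =
      M.ℙ i {ω | ∃ n : ℕ, 1 ≤ n ∧ ω n = j ∧ ∀ k, 1 ≤ k → k < n → ω k ∉ L})
    -- μ is invariant for the censored chain on L
    (hinv : ∀ j ∈ L, (∑' i, μ i * PL i j) = μ j)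
    -- starting from μ, the chain returns to L almost surely
    (hret : (∑' s, μ s * M.ℙ s {ω | ∃ n : ℕ, 1 ≤ n ∧ ω n ∈ L}) = 1)
    -- the occupation measure of one excursion
    (ν : S → ENNReal)
    (hν : ∀ t, ν t = ∑' m : ℕ, ∑' s, μ s *
      M.ℙ s {ω | ω m = t ∧ ∀ k, 1 ≤ k → k ≤ m → ω k ∉ L}) :
    ∀ t : S, (∑' s, ν s * M.p s t) = ν t :=
  stmt8_general M L μ hμL PL hPL hinv ν hν
end

section
/- Let A be a d×d matrix with strictly positive entries and ρ(A) < 1, let E be the all-ones d×d matrix, and let C = 4(2‖A + E‖)^{1 − 1/d} d^{1/d} where ‖·‖ is the max column sum norm. If 0 < ε < min{ min_{i,j} A(i,j), (1 − ρ(A))^d / C^d }, then the spectral radii λ⁻ = ρ(A − εE) and λ⁺ = ρ(A + εE) satisfy ρ(A) − C ε^{1/d} < λ⁻ < 1 and λ⁺ < ρ(A) + C ε^{1/d} < 1. -/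
/-!
Elsner's argument. Let the column sums of `P` and `Q` be at most `S` and those of `P - Q` at most
`δ`. An eigenvalue `z` of `P` has `‖z‖ ≤ S` and `det (z - P) = 0`, so
`χ_Q(z) = det (z - Q) - det (z - P)`, and telescoping column by column bounds this by
`d δ (2S)^(d-1)`. As `χ_Q(z)` is the product of the distances from `z` to the eigenvalues of `Q`,
one of them lies within `(d δ (2S)^(d-1))^(1/d) < 4 (2S)^(1-1/d) δ^(1/d)` of `z`; hence
`ρ(P) < ρ(Q) + 4 (2S)^(1-1/d) δ^(1/d)`. For `P, Q ∈ {A, A ± εE}` one may take `S = ‖A + E‖`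
(as `ε ≤ 1`) and `δ = dε`, which gives the constant `C`.
-/

open Matrix

/-- Maximum column sum matrix norm. -/
noncomputable def colNorm {n : ℕ} (M : Matrix (Fin n) (Fin n) ℝ) : ℝ :=
  ⨆ j, ∑ i, |M i j|

open Polynomial

theorem Polynomial.Monic.exists_mem_roots_norm_sub_pow_le {K : Type*} [NormedField K]
    {p : K[X]} (hmonic : p.Monic) (hsplit : p.Splits) (hdeg : p.natDegree ≠ 0) (a : K) :
    ∃ b ∈ p.roots, ‖a - b‖ ^ p.natDegree ≤ ‖p.eval a‖ := by
  classical
  have hcard := hsplit.natDegree_eq_card_roots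
  have hne : p.roots.toFinset.Nonempty := by
    rw [Multiset.toFinset_nonempty, ← Multiset.card_pos, ← hcard]
    exact Nat.pos_of_ne_zero hdeg
  obtain ⟨b, hb, hmin⟩ := p.roots.toFinset.exists_min_image (fun b => ‖a - b‖) hne
  refine ⟨b, Multiset.mem_toFinset.1 hb, ?_⟩
  calc ‖a - b‖ ^ p.natDegree = (p.roots.map fun _ => ‖a - b‖).prod := by
        rw [Multiset.map_const', Multiset.prod_replicate, hcard]
    _ ≤ (p.roots.map fun c => ‖a - c‖).prod :=
        Multiset.prod_map_le_prod_map₀ _ _ (fun _ _ => norm_nonneg _)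
          fun c hc => hmin c (Multiset.mem_toFinset.2 hc)
    _ = ‖p.eval a‖ := by
        rw [hsplit.eval_eq_prod_roots_of_monic hmonic, ← normHom_apply, map_multiset_prod,
          Multiset.map_map]
        rfl

namespace Matrix

variable {R : Type*} [NormedCommRing R] [NormOneClass R] {n : Type*} [Fintype n] [DecidableEq n]

theorem norm_det_le_prod_sum_norm_col (M : Matrix n n R) :
    ‖M.det‖ ≤ ∏ j, ∑ i, ‖M i j‖ := by
  let coeFn : Equiv.Perm n ↪ (n → n) := ⟨(⇑), DFunLike.coe_injective⟩
  calc ‖M.det‖ ≤ ∑ σ : Equiv.Perm n, ∏ j, ‖M (σ j) j‖ := by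
        rw [det_apply]
        refine (norm_sum_le _ _).trans (Finset.sum_le_sum fun σ _ => ?_)
        rcases Int.units_eq_one_or (Equiv.Perm.sign σ) with h | h <;>
          simpa [h] using Finset.norm_prod_le _ _
    _ = ∑ f ∈ Finset.univ.map coeFn, ∏ j, ‖M (f j) j‖ :=
        (Finset.sum_map Finset.univ coeFn fun f => ∏ j, ‖M (f j) j‖).symm
    _ ≤ ∑ f : n → n, ∏ j, ‖M (f j) j‖ :=
        Finset.sum_le_sum_of_subset_of_nonneg (Finset.subset_univ _)
          fun _ _ _ => Finset.prod_nonneg fun _ _ => norm_nonneg _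
    _ = ∏ j, ∑ i, ‖M i j‖ := by rw [Finset.prod_univ_sum, Fintype.piFinset_univ]

theorem norm_det_sub_det_le (M N : Matrix n n R) {B δ : ℝ}
    (hM : ∀ j, ∑ i, ‖M i j‖ ≤ B) (hN : ∀ j, ∑ i, ‖N i j‖ ≤ B)
    (hMN : ∀ j, ∑ i, ‖M i j - N i j‖ ≤ δ) :
    ‖M.det - N.det‖ ≤ Fintype.card n * δ * B ^ (Fintype.card n - 1) := by
  -- Any linear order on `n` will do; its decidable equality must be the ambient one.
  let _ : LinearOrder n := LinearOrder.lift' _ (Fintype.equivFin n).injective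
  obtain rfl : ‹DecidableEq n› = LinearOrder.toDecidableEq := Subsingleton.elim _ _
  let col : Matrix n n R → n → n → R := fun P j i => P i j
  let hybrid : n → Matrix n n R := fun k =>
    of fun j => if j < k then col M j else if j = k then col M j - col N j else col N j
  have htelescope : M.det - N.det = ∑ k, (hybrid k).det := by
    rw [← det_transpose M, ← det_transpose N]
    have h := detRowAlternating.map_piecewise_sub_map_piecewise (col M) (col N) (col M) .univ
    simp only [Finset.piecewise_univ, Finset.mem_univ, if_true] at h
    exact h
  have hterm : ∀ k, ‖(hybrid k).det‖ ≤ δ * B ^ (Fintype.card n - 1) := by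
    intro k
    rw [← det_transpose]
    refine (norm_det_le_prod_sum_norm_col _).trans ?_
    calc _ ≤ ∏ j, if j = k then δ else B := by
          refine Finset.prod_le_prod (fun _ _ => Finset.sum_nonneg fun _ _ => norm_nonneg _)
            fun j _ => ?_
          by_cases hjk : j = k
          · subst hjk
            simpa [hybrid, col] using hMN j
          · simp only [hybrid, col, transpose_apply, of_apply, if_neg hjk]
            split_ifs
            · exact hM j
            · exact hN j
      _ = δ * B ^ (Fintype.card n - 1) := by
          rw [← Finset.mul_prod_erase _ _ (Finset.mem_univ k), if_pos rfl,
            Finset.prod_congr rfl fun j hj => if_neg (Finset.ne_of_mem_erase hj),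
            Finset.prod_const, Finset.card_erase_of_mem (Finset.mem_univ k), Finset.card_univ]
  calc ‖M.det - N.det‖ = ‖∑ k, (hybrid k).det‖ := by rw [htelescope]
    _ ≤ ∑ k, ‖(hybrid k).det‖ := norm_sum_le _ _
    _ ≤ ∑ _k : n, δ * B ^ (Fintype.card n - 1) := Finset.sum_le_sum fun k _ => hterm k
    _ = _ := by rw [Finset.sum_const, Finset.card_univ, nsmul_eq_mul, mul_assoc]

theorem norm_le_of_mem_roots_charpoly {K : Type*} [NormedField K] {M : Matrix n n K} {B : ℝ}
    (hM : ∀ j, ∑ i, ‖M i j‖ ≤ B) {z : K} (hz : z ∈ M.charpoly.roots) : ‖z‖ ≤ B := by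
  have hroot : Module.End.HasEigenvalue (toLin' Mᵀ) z := by
    rw [Module.End.hasEigenvalue_iff_isRoot_charpoly, charpoly_toLin',
      charpoly_transpose]
    exact (mem_roots M.charpoly_monic.ne_zero).1 hz
  obtain ⟨k, hk⟩ := eigenvalue_mem_ball hroot
  calc ‖z‖ ≤ ‖M k k‖ + ∑ i ∈ Finset.univ.erase k, ‖M i k‖ := norm_le_of_mem_closedBall hk
    _ = ∑ i, ‖M i k‖ := Finset.add_sum_erase _ (fun i => ‖M i k‖) (Finset.mem_univ k)
    _ ≤ B := hM k

theorem exists_mem_roots_charpoly_norm_sub_pow_le {K : Type*} [NormedField K] [IsAlgClosed K]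
    [Nonempty n] {M N : Matrix n n K} {S δ : ℝ}
    (hM : ∀ j, ∑ i, ‖M i j‖ ≤ S) (hN : ∀ j, ∑ i, ‖N i j‖ ≤ S)
    (hMN : ∀ j, ∑ i, ‖M i j - N i j‖ ≤ δ) {z : K} (hz : z ∈ M.charpoly.roots) :
    ∃ w ∈ N.charpoly.roots,
      ‖z - w‖ ^ Fintype.card n ≤ Fintype.card n * δ * (2 * S) ^ (Fintype.card n - 1) := by
  have hzS := norm_le_of_mem_roots_charpoly hM hz
  have hshift : ∀ P : Matrix n n K, (∀ j, ∑ i, ‖P i j‖ ≤ S) →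
      ∀ j, ∑ i, ‖(scalar n z - P) i j‖ ≤ 2 * S := by
    intro P hP j
    calc ∑ i, ‖(scalar n z - P) i j‖ ≤ ∑ i, (‖scalar n z i j‖ + ‖P i j‖) :=
          Finset.sum_le_sum fun i _ => norm_sub_le _ _
      _ = ‖z‖ + ∑ i, ‖P i j‖ := by
          simp [Finset.sum_add_distrib, diagonal_apply, apply_ite]
      _ ≤ 2 * S := by linarith [hP j]
  obtain ⟨w, hw, hle⟩ := N.charpoly_monic.exists_mem_roots_norm_sub_pow_le
    (IsAlgClosed.splits _) (by rw [charpoly_natDegree_eq_dim]; exact Fintype.card_ne_zero) z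
  rw [charpoly_natDegree_eq_dim] at hle
  refine ⟨w, hw, hle.trans ?_⟩
  have hdet : (scalar n z - M).det = 0 := by
    rw [← eval_charpoly]
    exact (mem_roots M.charpoly_monic.ne_zero).1 hz
  calc ‖N.charpoly.eval z‖ = ‖(scalar n z - N).det - (scalar n z - M).det‖ := by
        rw [eval_charpoly, hdet, sub_zero]
    _ ≤ _ := norm_det_sub_det_le _ _ (hshift N hN) (hshift M hM) fun j => by
        simpa only [sub_apply, sub_sub_sub_cancel_left] using hMN j

end Matrix

noncomputable def elsnerBound (d : ℕ) (S δ : ℝ) : ℝ :=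
  4 * (2 * S) ^ (1 - 1 / d : ℝ) * δ ^ (1 / d : ℝ)

section ElsnerBound

variable {d : ℕ} {S δ : ℝ}

theorem elsnerBound_pos (hS : 0 < S) (hδ : 0 < δ) : 0 < elsnerBound d S δ := by
  unfold elsnerBound
  positivity

theorem elsnerBound_pow (hd : 0 < d) (hS : 0 ≤ S) (hδ : 0 ≤ δ) :
    elsnerBound d S δ ^ d = 4 ^ d * (2 * S) ^ (d - 1) * δ := by
  have hexp : (1 - 1 / d : ℝ) * d = (d - 1 : ℕ) := by
    rw [Nat.cast_sub hd, Nat.cast_one]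
    field_simp
  have hS' : ((2 * S) ^ (1 - 1 / d : ℝ)) ^ d = (2 * S) ^ (d - 1) := by
    rw [← Real.rpow_natCast, ← Real.rpow_mul (by positivity), hexp, Real.rpow_natCast]
  have hδ' : (δ ^ (1 / d : ℝ)) ^ d = δ := by
    rw [one_div, Real.rpow_inv_natCast_pow hδ hd.ne']
  rw [elsnerBound, mul_pow, mul_pow, hS', hδ']

theorem elsnerBound_mul {a b : ℝ} (ha : 0 ≤ a) (hb : 0 ≤ b) :
    elsnerBound d S (a * b) = elsnerBound d S a * b ^ (1 / d : ℝ) := by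
  rw [elsnerBound, elsnerBound, Real.mul_rpow ha hb]
  ring

theorem one_le_elsnerBound (hd : 0 < d) (hS : 1 ≤ 2 * S) (hδ : 1 ≤ δ) :
    1 ≤ elsnerBound d S δ := by
  have hd1 : (1 : ℝ) ≤ d := Nat.one_le_cast.2 hd
  have h₁ : 1 ≤ (2 * S) ^ (1 - 1 / d : ℝ) :=
    Real.one_le_rpow hS (sub_nonneg.2 (div_le_one_of_le₀ hd1 (by positivity)))
  have h₂ : 1 ≤ δ ^ (1 / d : ℝ) := Real.one_le_rpow hδ (by positivity)
  rw [elsnerBound]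
  nlinarith

end ElsnerBound

theorem exists_mem_roots_norm_sub_lt_elsnerBound {d : ℕ} (hd : 0 < d)
    {P Q : Matrix (Fin d) (Fin d) ℝ} {S δ : ℝ} (hS : 0 < S) (hδ : 0 < δ)
    (hP : ∀ j, ∑ i, |P i j| ≤ S) (hQ : ∀ j, ∑ i, |Q i j| ≤ S)
    (hPQ : ∀ j, ∑ i, |P i j - Q i j| ≤ δ) {z : ℂ}
    (hz : z ∈ (P.map Complex.ofReal).charpoly.roots) :
    ∃ w ∈ (Q.map Complex.ofReal).charpoly.roots, ‖z - w‖ < elsnerBound d S δ := by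
  have : Nonempty (Fin d) := ⟨⟨0, hd⟩⟩
  obtain ⟨w, hw, hle⟩ := exists_mem_roots_charpoly_norm_sub_pow_le
    (M := P.map Complex.ofReal) (N := Q.map Complex.ofReal) (by simpa using hP)
    (by simpa using hQ) (fun j => by simpa [← Complex.ofReal_sub] using hPQ j) hz
  rw [Fintype.card_fin] at hle
  refine ⟨w, hw, lt_of_pow_lt_pow_left₀ d (elsnerBound_pos hS hδ).le (hle.trans_lt ?_)⟩
  have hd4 : (d : ℝ) < 4 ^ d := by exact_mod_cast Nat.lt_pow_self (by norm_num)
  have hpos : 0 < δ * (2 * S) ^ (d - 1) := by positivity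
  rw [elsnerBound_pow hd hS.le hδ.le]
  nlinarith

section SpectralRadius

variable {n : ℕ}

theorem specRadius_lt_iff {A : Matrix (Fin n) (Fin n) ℝ} {r : ℝ} :
    specRadius A < r ↔ 0 < r ∧ ∀ z ∈ (A.map Complex.ofReal).charpoly.roots, ‖z‖ < r := by
  suffices h : ∀ l : List ℝ, l.foldr max 0 < r ↔ 0 < r ∧ ∀ x ∈ l, x < r by
    rw [specRadius, h, and_congr_right_iff]
    simp only [Multiset.mem_toList, Multiset.forall_mem_map_iff, implies_true]
  intro l
  induction l with
  | nil => simp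
  | cons x l ih => simp only [List.foldr_cons, max_lt_iff, ih, List.forall_mem_cons]; tauto

theorem specRadius_nonneg (A : Matrix (Fin n) (Fin n) ℝ) : 0 ≤ specRadius A :=
  not_lt.1 fun h => lt_irrefl 0 (specRadius_lt_iff.1 h).1

theorem specRadius_lt_add_of_forall_exists_norm_sub_lt {A B : Matrix (Fin n) (Fin n) ℝ} {c : ℝ}
    (hc : 0 < c) (h : ∀ z ∈ (A.map Complex.ofReal).charpoly.roots,
      ∃ w ∈ (B.map Complex.ofReal).charpoly.roots, ‖z - w‖ < c) :
    specRadius A < specRadius B + c := by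
  refine specRadius_lt_iff.2 ⟨by linarith [specRadius_nonneg B], fun z hz => ?_⟩
  obtain ⟨w, hw, hzw⟩ := h z hz
  have hwB : ‖w‖ ≤ specRadius B :=
    List.le_max_of_le' 0 (Multiset.mem_toList.2 (Multiset.mem_map_of_mem _ hw)) le_rfl
  linarith [norm_le_norm_add_norm_sub' z w]

theorem specRadius_lt_specRadius_add_elsnerBound {d : ℕ} (hd : 0 < d)
    {P Q : Matrix (Fin d) (Fin d) ℝ} {S δ : ℝ} (hS : 0 < S) (hδ : 0 < δ)
    (hP : ∀ j, ∑ i, |P i j| ≤ S) (hQ : ∀ j, ∑ i, |Q i j| ≤ S)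
    (hPQ : ∀ j, ∑ i, |P i j - Q i j| ≤ δ) :
    specRadius P < specRadius Q + elsnerBound d S δ :=
  specRadius_lt_add_of_forall_exists_norm_sub_lt (elsnerBound_pos hS hδ) fun _ hz =>
    exists_mem_roots_norm_sub_lt_elsnerBound hd hS hδ hP hQ hPQ hz

end SpectralRadius

theorem sum_abs_le_colNorm {n : ℕ} (M : Matrix (Fin n) (Fin n) ℝ) (j : Fin n) :
    ∑ i, |M i j| ≤ colNorm M :=
  le_ciSup (f := fun j => ∑ i, |M i j|) (Finite.bddAbove_range _) j

theorem abs_le_colNorm {n : ℕ} (M : Matrix (Fin n) (Fin n) ℝ) (i j : Fin n) :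
    |M i j| ≤ colNorm M :=
  (Finset.single_le_sum (f := fun i => |M i j|) (fun _ _ => abs_nonneg _)
    (Finset.mem_univ i)).trans (sum_abs_le_colNorm M j)

theorem sum_abs_le_colNorm_of_nonneg_of_le {n : ℕ} {P M : Matrix (Fin n) (Fin n) ℝ}
    (hPM : ∀ i j, 0 ≤ P i j ∧ P i j ≤ M i j) (j : Fin n) : ∑ i, |P i j| ≤ colNorm M :=
  (Finset.sum_le_sum fun i _ => (abs_of_nonneg (hPM i j).1).trans_le
    ((hPM i j).2.trans (le_abs_self _))).trans (sum_abs_le_colNorm M j)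

theorem specRadius_lt_specRadius_add_elsnerBound_of_abs_sub_le {d : ℕ} (hd : 0 < d)
    {M P Q : Matrix (Fin d) (Fin d) ℝ} {ε : ℝ} (hM : 0 < colNorm M) (hε : 0 < ε)
    (hP : ∀ i j, 0 ≤ P i j ∧ P i j ≤ M i j) (hQ : ∀ i j, 0 ≤ Q i j ∧ Q i j ≤ M i j)
    (hPQ : ∀ i j, |P i j - Q i j| ≤ ε) :
    specRadius P < specRadius Q + elsnerBound d (colNorm M) (d * ε) :=
  specRadius_lt_specRadius_add_elsnerBound hd hM (by positivity)
    (sum_abs_le_colNorm_of_nonneg_of_le hP) (sum_abs_le_colNorm_of_nonneg_of_le hQ)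
    fun j => (Finset.sum_le_sum fun i _ => hPQ i j).trans (by simp)

theorem mul_rpow_one_div_lt {C ε r : ℝ} {d : ℕ} (hd : 0 < d) (hC : 0 < C) (hε : 0 ≤ ε)
    (hr : 0 ≤ r) (h : ε < r ^ d / C ^ d) : C * ε ^ (1 / d : ℝ) < r := by
  rw [← lt_div_iff₀' hC, one_div, Real.rpow_inv_lt_iff_of_pos hε (by positivity)
    (by exact_mod_cast hd), Real.rpow_natCast, div_pow]
  exact h

theorem stmt12 {d : ℕ} (hd : 0 < d) (A : Matrix (Fin d) (Fin d) ℝ)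
    (hA : ∀ i j, 0 < A i j) (hρ : specRadius A < 1)
    (E : Matrix (Fin d) (Fin d) ℝ) (hE : ∀ i j, E i j = 1)
    (C : ℝ) (hC : C = 4 * (2 * colNorm (A + E)) ^ ((1 : ℝ) - 1 / d) * (d : ℝ) ^ ((1 : ℝ) / d))
    (ε : ℝ) (hε : 0 < ε)
    (hε₁ : ∀ i j, ε < A i j)
    (hε₂ : ε < (1 - specRadius A) ^ d / C ^ d) :
    specRadius A - C * ε ^ ((1 : ℝ) / d) < specRadius (A - ε • E) ∧
    specRadius (A - ε • E) < 1 ∧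
    specRadius (A + ε • E) < specRadius A + C * ε ^ ((1 : ℝ) / d) ∧
    specRadius A + C * ε ^ ((1 : ℝ) / d) < 1 := by
  set S := colNorm (A + E)
  have hS : 1 ≤ S := by
    let i₀ : Fin d := ⟨0, hd⟩
    refine le_trans ?_ (abs_le_colNorm (A + E) i₀ i₀)
    rw [Matrix.add_apply, hE, abs_of_pos (by linarith [hA i₀ i₀])]
    linarith [hA i₀ i₀]
  have hCε : C * ε ^ (1 / d : ℝ) = elsnerBound d S (d * ε) := by
    rw [hC, elsnerBound_mul (Nat.cast_nonneg d) hε.le]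
    rfl
  have hc : C * ε ^ (1 / d : ℝ) < 1 - specRadius A :=
    mul_rpow_one_div_lt hd (hC ▸ elsnerBound_pos (by linarith) (by positivity)) hε.le
      (by linarith) hε₂
  rw [hCε] at hc ⊢
  have hε1 : ε ≤ 1 := by
    by_contra! h
    have hdε : 1 ≤ (d : ℝ) * ε := one_le_mul_of_one_le_of_one_le (Nat.one_le_cast.2 hd) h.le
    linarith [one_le_elsnerBound hd (S := S) (by linarith) hdε, specRadius_nonneg A]
  have hA₀ : ∀ i j, 0 ≤ A i j ∧ A i j ≤ (A + E) i j := fun i j => by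
    simp only [Matrix.add_apply, hE]
    constructor <;> linarith [hA i j]
  have hAsub : ∀ i j, 0 ≤ (A - ε • E) i j ∧ (A - ε • E) i j ≤ (A + E) i j := fun i j => by
    simp only [Matrix.add_apply, Matrix.sub_apply, Matrix.smul_apply, hE, smul_eq_mul, mul_one]
    constructor <;> linarith [hε₁ i j]
  have hAadd : ∀ i j, 0 ≤ (A + ε • E) i j ∧ (A + ε • E) i j ≤ (A + E) i j := fun i j => by
    simp only [Matrix.add_apply, Matrix.smul_apply, hE, smul_eq_mul, mul_one]
    constructor <;> linarith [hA i j]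
  have hsub := specRadius_lt_specRadius_add_elsnerBound_of_abs_sub_le hd (by linarith) hε
    hAsub hA₀ fun i j => by simp [hE, abs_of_pos hε]
  have hsub' := specRadius_lt_specRadius_add_elsnerBound_of_abs_sub_le hd (by linarith) hε
    hA₀ hAsub fun i j => by simp [hE, abs_of_pos hε]
  have hadd := specRadius_lt_specRadius_add_elsnerBound_of_abs_sub_le hd (by linarith) hε
    hAadd hA₀ fun i j => by simp [hE, abs_of_pos hε]
  exact ⟨by linarith, by linarith, hadd, by linarith⟩
end

section
/- Let (A_n)_{n≥1} be d×d nonnegative matrices converging entrywise to a matrix A with strictly positive entries and ρ(A) < 1, and let (u_n) be uniformly bounded entrywise positive vectors. Then for any entrywise nonnegative vector v the series ∑_{k≥1} vᵀ A_1 A_2 ⋯ A_{k−1} u_k converges. -/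
/-!
By Gelfand's formula, `ρ(A) < 1` gives a power with `‖A ^ m‖ < 1` for the `ℓ∞` operator norm.
The blocks `A_{n+1} ⋯ A_{n+m}` converge to `A ^ m`, so from some index on they are contractions
by a fixed factor `r < 1`; hence the partial products `A_1 ⋯ A_j` decay geometrically every `m`
steps and, `u` being bounded, the series converges absolutely.
-/

open Matrix Filter

open Topology

attribute [local instance] Matrix.linftyOpNormedAddCommGroup Matrix.linftyOpNormedRing
  Matrix.linftyOpNormedAlgebra

theorem spectrum.exists_norm_pow_lt_one_of_spectralRadius_lt_one {A : Type*} [NormedRing A]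
    [NormedAlgebra ℂ A] [CompleteSpace A] (a : A) (h : spectralRadius ℂ a < 1) :
    ∃ m, 0 < m ∧ ‖a ^ m‖ < 1 := by
  have gelfand := spectrum.pow_norm_pow_one_div_tendsto_nhds_spectralRadius a
  obtain ⟨m, hm, hm0⟩ := ((gelfand.eventually (gt_mem_nhds h)).and (eventually_gt_atTop 0)).exists
  refine ⟨m, hm0, ?_⟩
  rwa [ENNReal.ofReal_lt_one, Real.rpow_lt_one_iff' (norm_nonneg _) (by positivity)] at hm

theorem Matrix.spectralRadius_map_ofReal_le_specRadius {n : ℕ} (A : Matrix (Fin n) (Fin n) ℝ) :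
    spectralRadius ℂ (A.map Complex.ofReal) ≤ ENNReal.ofReal (specRadius A) := by
  refine iSup₂_le fun μ hμ => ?_
  rw [Matrix.mem_spectrum_iff_isRoot_charpoly] at hμ
  rw [← ENNReal.ofReal_coe_nnreal, coe_nnnorm]
  refine ENNReal.ofReal_le_ofReal (List.le_max_of_le' 0 ?_ le_rfl)
  rw [Multiset.mem_toList]
  exact Multiset.mem_map_of_mem _ ((Polynomial.mem_roots (charpoly_monic _).ne_zero).mpr hμ)

theorem Matrix.linfty_opNorm_map_ofReal_s15 {m n : Type*} [Fintype m] [Fintype n]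
    (X : Matrix m n ℝ) : ‖X.map Complex.ofReal‖ = ‖X‖ := by
  simp [linfty_opNorm_def]

theorem Matrix.exists_norm_pow_lt_one_of_specRadius_lt_one {n : ℕ} (A : Matrix (Fin n) (Fin n) ℝ)
    (h : specRadius A < 1) : ∃ m, 0 < m ∧ ‖A ^ m‖ < 1 := by
  obtain ⟨m, hm, hAm⟩ :=
    spectrum.exists_norm_pow_lt_one_of_spectralRadius_lt_one (A.map Complex.ofReal)
      ((spectralRadius_map_ofReal_le_specRadius A).trans_lt (ENNReal.ofReal_lt_one.mpr h))
  refine ⟨m, hm, ?_⟩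
  have hmap : (A ^ m).map Complex.ofReal = A.map Complex.ofReal ^ m :=
    map_pow Complex.ofRealHom.mapMatrix A m
  rwa [← hmap, linfty_opNorm_map_ofReal_s15] at hAm

theorem summable_of_add_le_mul {g : ℕ → ℝ} {m : ℕ} (hm : 0 < m) {r : ℝ} (hr0 : 0 ≤ r)
    (hr1 : r < 1) (hg0 : ∀ t, 0 ≤ g t) (hg : ∀ t, g (t + m) ≤ r * g t) : Summable g := by
  have : NeZero m := ⟨hm.ne'⟩
  have hgeom : ∀ q s, g (q * m + s) ≤ r ^ q * g s := by
    intro q s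
    induction q with
    | zero => simp
    | succ q ih =>
      calc g ((q + 1) * m + s) = g ((q * m + s) + m) := by ring_nf
        _ ≤ r * g (q * m + s) := hg _
        _ ≤ r * (r ^ q * g s) := by gcongr
        _ = r ^ (q + 1) * g s := by ring
  rw [← (Nat.divModEquiv m).symm.summable_iff]
  refine Summable.of_nonneg_of_le (fun _ => hg0 _) (fun p => hgeom p.1 p.2)
    ((summable_geometric_of_lt_one hr0 hr1).mul_of_nonneg (g := fun s : Fin m => g s)
      (Summable.of_finite) (fun q => by positivity) (fun s => hg0 s))

theorem summable_norm_prod_range_of_tendsto {R : Type*} [NormedRing R] {A : ℕ → R} {L : R}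
    (hA : Tendsto A atTop (𝓝 L)) {m : ℕ} (hm : 0 < m) (hL : ‖L ^ m‖ < 1) :
    Summable fun j => ‖((List.range j).map A).prod‖ := by
  set P := fun j => ((List.range j).map A).prod
  set block := fun n => ((List.range m).map fun i => A (n + i)).prod
  have hP : ∀ n, P (n + m) = P n * block n := by
    intro n
    simp [P, block, List.range_add, List.prod_append, List.map_map, Function.comp_def]
  have hblock : Tendsto block atTop (𝓝 (L ^ m)) := by
    simpa using tendsto_list_prod (f := fun i n => A (n + i)) (a := fun _ => L) (List.range m)
      fun i _ => hA.comp (tendsto_add_atTop_nat i)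
  obtain ⟨r, hLr, hr1⟩ := exists_between hL
  obtain ⟨N, hN⟩ := eventually_atTop.mp (hblock.norm.eventually (gt_mem_nhds hLr))
  refine (summable_nat_add_iff N).mp (summable_of_add_le_mul hm ((norm_nonneg _).trans hLr.le)
    hr1 (fun _ => norm_nonneg _) fun t => ?_)
  calc ‖P (t + m + N)‖ = ‖P (t + N) * block (t + N)‖ := by rw [← hP, Nat.add_right_comm]
    _ ≤ ‖P (t + N)‖ * ‖block (t + N)‖ := norm_mul_le _ _
    _ ≤ ‖P (t + N)‖ * r := by gcongr; exact (hN _ (by omega)).le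
    _ = r * ‖P (t + N)‖ := mul_comm _ _

theorem Matrix.abs_dotProduct_le {n : Type*} [Fintype n] (v w : n → ℝ) :
    |v ⬝ᵥ w| ≤ (∑ i, |v i|) * ‖w‖ := by
  rw [Finset.sum_mul]
  refine (Finset.abs_sum_le_sum_abs _ _).trans (Finset.sum_le_sum fun i _ => ?_)
  rw [abs_mul]
  gcongr
  exact (Real.norm_eq_abs (w i)).symm.trans_le (norm_le_pi_norm w i)

theorem stmt15_general {d : ℕ}
    (A : ℕ → Matrix (Fin d) (Fin d) ℝ) (Alim : Matrix (Fin d) (Fin d) ℝ)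
    (hAconv : ∀ i j, Tendsto (fun n => A n i j) atTop (nhds (Alim i j)))
    (hρ : specRadius Alim < 1)
    (u : ℕ → Fin d → ℝ) (M : ℝ)
    (hupos : ∀ k i, 0 < u k i) (hubdd : ∀ k i, u k i ≤ M)
    (v : Fin d → ℝ) :
    Summable (fun j : ℕ =>
      v ⬝ᵥ (((List.range j).map (fun i => A (i + 1))).prod *ᵥ u (j + 1))) := by
  have hA : Tendsto (fun n => A (n + 1)) atTop (𝓝 Alim) := (tendsto_add_atTop_iff_nat 1).mpr
    (tendsto_pi_nhds.mpr fun i => tendsto_pi_nhds.mpr (hAconv i))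
  have hu : ∀ k, ‖u k‖ ≤ |M| := fun k =>
    (pi_norm_le_iff_of_nonneg (abs_nonneg M)).mpr fun i => by
      rw [Real.norm_eq_abs, abs_of_pos (hupos k i)]
      exact (hubdd k i).trans (le_abs_self M)
  obtain ⟨m, hm, hAm⟩ := exists_norm_pow_lt_one_of_specRadius_lt_one Alim hρ
  refine ((summable_norm_prod_range_of_tendsto hA hm hAm).mul_left ((∑ i, |v i|) * |M|)
    ).of_norm_bounded fun j => ?_
  set P := ((List.range j).map fun i => A (i + 1)).prod
  calc ‖v ⬝ᵥ (P *ᵥ u (j + 1))‖ ≤ (∑ i, |v i|) * ‖P *ᵥ u (j + 1)‖ := abs_dotProduct_le _ _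
    _ ≤ (∑ i, |v i|) * (‖P‖ * |M|) := by
      gcongr
      exact (linfty_opNorm_mulVec _ _).trans (by gcongr; exact hu _)
    _ = (∑ i, |v i|) * |M| * ‖P‖ := by ring

/-- If `Aₙ → A` entrywise with `A` positive and `ρ(A) < 1`, and the positive
vectors `uₖ` are uniformly bounded, then `∑_{k ≥ 1} vᵀ A₁ ⋯ A_{k-1} u_k`
converges for every nonnegative `v` (the term `k = j + 1` has `j` factors). -/
theorem stmt15 {d : ℕ} (hd : 0 < d)
    (A : ℕ → Matrix (Fin d) (Fin d) ℝ) (Alim : Matrix (Fin d) (Fin d) ℝ)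
    (hApos : ∀ n, 1 ≤ n → ∀ i j, 0 ≤ A n i j)
    (hAconv : ∀ i j, Tendsto (fun n => A n i j) atTop (nhds (Alim i j)))
    (hAlim : ∀ i j, 0 < Alim i j) (hρ : specRadius Alim < 1)
    (u : ℕ → Fin d → ℝ) (M : ℝ)
    (hupos : ∀ k i, 0 < u k i) (hubdd : ∀ k i, u k i ≤ M)
    (v : Fin d → ℝ) (hv : ∀ i, 0 ≤ v i) :
    Summable (fun j : ℕ =>
      v ⬝ᵥ (((List.range j).map (fun i => A (i + 1))).prod *ᵥ u (j + 1))) :=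
  stmt15_general A Alim hAconv hρ u M hupos hubdd v
end

section
/- Let (X_n) be an irreducible positive recurrent Markov chain on a countable state space S, L ⊆ S a finite nonempty set, μ̆ a probability measure on L invariant for the censored chain on L, and ν̄(s) = E_{μ̆}[∑_{m=0}^{T_L⁺ − 1} 1{X_m = s}]. Then the total mass of ν̄ equals E_{μ̆}[T_L⁺], and if E_{μ̆}[T_L⁺] < ∞ then ν(s) = ν̄(s)/E_{μ̆}[T_L⁺] defines a stationary probability distribution for the chain. -/
open MeasureTheory

/-!
Split the excursion from `L` by its length: `ν̄(t) = ∑ₘ ∑ₛ μ(s) ₗpᵐ(s, t)`, where the taboo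
probability `ₗpᵐ(s, t)` is the chance of being at `t` at time `m` with `T_L⁺ > m`. Summing over `t`
gives `∑ₘ P_μ(T_L⁺ > m) = E_μ[T_L⁺]`. By the Markov property, `∑ₜ ₗpᵐ(s, t) p(t, u)` is the
chance that `T_L⁺ > m` and `X_{m+1} = u`: for `u ∉ L` this is `ₗpᵐ⁺¹(s, u)`, and for `u ∈ L`
summing over `m` gives `P^{(L)}(s, u)`. So `ν̄ p = ν̄` off `L` by reindexing, and on `L`, where
`ν̄ = μ`, by the censored invariance of `μ`. Since `E_μ[T_L⁺] ≥ 1`, normalising is legitimate.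
-/

section Fibers

variable {α β : Type*} [MeasurableSpace α] [MeasurableSpace β] [Countable β]
  [MeasurableSingletonClass β]

lemma measure_eq_tsum_inter_preimage_singleton (κ : Measure α) {f : α → β} (hf : Measurable f)
    {A : Set α} (hA : MeasurableSet A) : κ A = ∑' b, κ (A ∩ f ⁻¹' {b}) := by
  rw [← measure_iUnion (fun b b' hbb' => (Set.disjoint_singleton.2 hbb').preimage f |>.mono
      Set.inter_subset_right Set.inter_subset_right)
    (fun b => hA.inter (hf (measurableSet_singleton b))), ← Set.inter_iUnion,
    ← Set.preimage_iUnion, Set.iUnion_singleton_eq_range, Set.range_id', Set.preimage_univ,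
    Set.inter_univ]

end Fibers

namespace MarkovChain

section Paths

variable {S : Type*}

def avoiding (L : Set S) (m : ℕ) : Set (ℕ → S) := {ω | ∀ k, 1 ≤ k → k ≤ m → ω k ∉ L}

def firstReturnAt (L : Set S) (u : S) : Set (ℕ → S) :=
  {ω | ∃ n, 1 ≤ n ∧ ω n = u ∧ ∀ k, 1 ≤ k → k < n → ω k ∉ L}

lemma avoiding_zero (L : Set S) : avoiding L 0 = Set.univ :=
  Set.eq_univ_of_forall fun _ _ h1 h0 => absurd (h1.trans h0) (by omega)

lemma avoiding_inter_eval_succ_of_notMem {L : Set S} {u : S} (hu : u ∉ L) (m : ℕ) :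
    avoiding L m ∩ {ω | ω (m + 1) = u} = {ω | ω (m + 1) = u} ∩ avoiding L (m + 1) := by
  ext ω
  simp only [avoiding, Set.mem_inter_iff, Set.mem_ofPred_eq]
  refine ⟨fun ⟨h, hωu⟩ => ⟨hωu, fun k hk1 hk => ?_⟩,
    fun ⟨hωu, h⟩ => ⟨fun k hk1 hk => h k hk1 (by omega), hωu⟩⟩
  rcases Nat.lt_or_eq_of_le hk with hk | rfl
  · exact h k hk1 (by omega)
  · rwa [hωu]

lemma iUnion_avoiding_inter_eval_succ (L : Set S) (u : S) :
    ⋃ m, avoiding L m ∩ {ω | ω (m + 1) = u} = firstReturnAt L u := by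
  ext ω
  simp only [Set.mem_iUnion, avoiding, firstReturnAt, Set.mem_inter_iff, Set.mem_ofPred_eq]
  constructor
  · rintro ⟨m, h, hωu⟩
    exact ⟨m + 1, by omega, hωu, fun k hk1 hk => h k hk1 (by omega)⟩
  · rintro ⟨n, hn, hωu, h⟩
    obtain ⟨m, rfl⟩ := Nat.exists_eq_add_of_le' hn
    exact ⟨m, fun k hk1 hk => h k hk1 (by omega), hωu⟩

lemma pairwise_disjoint_avoiding_inter_eval_succ {L : Set S} {u : S} (hu : u ∈ L) :
    Pairwise (Function.onFun Disjoint fun m => avoiding L m ∩ {ω | ω (m + 1) = u}) :=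
  (pairwise_disjoint_on _).2 fun m m' h => Set.disjoint_left.2 fun ω ⟨_, hωu⟩ ⟨h', _⟩ =>
    h' (m + 1) (by omega) h (by rwa [hωu])

lemma measurableSet_avoiding [MeasurableSpace S] {L : Set S} (hL : MeasurableSet L) (m : ℕ) :
    MeasurableSet (avoiding L m) := by
  have hinter : avoiding L m = ⋂ k ∈ Set.Icc 1 m, {ω | ω k ∈ Lᶜ} := by
    ext ω
    simp [avoiding, and_imp]
  rw [hinter]
  exact .biInter (Set.to_countable _) fun k _ => (measurable_pi_apply k) hL.compl

lemma measurableSet_eval_eq [MeasurableSpace S] [MeasurableSingletonClass S] (m : ℕ) (t : S) :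
    MeasurableSet {ω : ℕ → S | ω m = t} :=
  (measurableSet_singleton t).preimage (measurable_pi_apply m)

end Paths

variable {S : Type*} [Countable S] [MeasurableSpace S] (M : MarkovChain S)

lemma measure_agree_inter_eval_succ (x : S) (m : ℕ) (ω₀ : ℕ → S) (u : S) :
    M.ℙ x ({ω | ∀ i ≤ m, ω i = ω₀ i} ∩ {ω | ω (m + 1) = u}) =
      M.ℙ x {ω | ∀ i ≤ m, ω i = ω₀ i} * M.p (ω₀ m) u := by
  have hagree : ∀ i ≤ m, Function.update ω₀ (m + 1) u i = ω₀ i := fun i hi =>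
    Function.update_of_ne (by omega) _ _
  convert M.step x m (Function.update ω₀ (m + 1) u) using 3
  · ext ω
    simp only [Set.mem_inter_iff, Set.mem_ofPred_eq]
    constructor
    · rintro ⟨h, hu⟩ i hi
      rcases Nat.lt_or_eq_of_le hi with hi | rfl
      · rw [h i (by omega), hagree i (by omega)]
      · simpa using hu
    · intro h
      exact ⟨fun i hi => (h i (by omega)).trans (hagree i hi),
        (h (m + 1) le_rfl).trans (by simp)⟩
  · ext ω
    exact forall₂_congr fun i hi => by rw [hagree i hi]
  · rw [hagree m le_rfl]
  · simp

/-- The taboo probability `ₗpᵐ(s, t)`. -/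
def taboo (L : Set S) (m : ℕ) (s t : S) : ENNReal :=
  M.ℙ s ({ω | ω m = t} ∩ avoiding L m)

/-- `ν̄(t)`: the expected number of visits to `t` before `T_L⁺`, starting from `μ`. -/
noncomputable def excursion (L : Set S) (μ : S → ENNReal) (t : S) : ENNReal :=
  ∑' m, ∑' s, μ s * M.taboo L m s t

lemma taboo_succ_of_mem {L : Set S} {u : S} (hu : u ∈ L) (m : ℕ) (s : S) :
    M.taboo L (m + 1) s u = 0 :=
  measure_mono_null (fun ω (hω : ω (m + 1) = u ∧ ω ∈ avoiding L (m + 1)) =>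
    hω.2 (m + 1) (by omega) le_rfl (hω.1 ▸ hu)) measure_empty

lemma taboo_succ_of_notMem {L : Set S} {u : S} (hu : u ∉ L) (m : ℕ) (s : S) :
    M.taboo L (m + 1) s u = M.ℙ s (avoiding L m ∩ {ω | ω (m + 1) = u}) := by
  rw [taboo, avoiding_inter_eval_succ_of_notMem hu]

variable [MeasurableSingletonClass S]

/-- The Markov property at time `m`: `B` is a countable union of cylinders of length `m + 1`,
on each of which `MarkovChain.step` applies. -/
lemma measure_inter_eval_succ (x : S) {m : ℕ} {B : Set (ℕ → S)} (hB : MeasurableSet B)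
    (hBm : ∀ ω ω', (∀ i ≤ m, ω i = ω' i) → ω ∈ B → ω' ∈ B) {t : S} (hBt : ∀ ω ∈ B, ω m = t)
    (u : S) : M.ℙ x (B ∩ {ω | ω (m + 1) = u}) = M.ℙ x B * M.p t u := by
  set r : (ℕ → S) → (Fin (m + 1) → S) := fun ω i => ω i
  have hr : Measurable r := measurable_pi_lambda _ fun i => measurable_pi_apply _
  have hu : MeasurableSet {ω : ℕ → S | ω (m + 1) = u} := measurableSet_eval_eq (m + 1) u
  rw [measure_eq_tsum_inter_preimage_singleton _ hr (hB.inter hu),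
    measure_eq_tsum_inter_preimage_singleton _ hr hB, ← ENNReal.tsum_mul_right]
  refine tsum_congr fun g => ?_
  rcases (B ∩ r ⁻¹' {g}).eq_empty_or_nonempty with hg | ⟨ω₀, hω₀B, hω₀g⟩
  · rw [hg, measure_empty, zero_mul, Set.inter_right_comm, hg, Set.empty_inter, measure_empty]
  obtain rfl : r ω₀ = g := hω₀g
  have hfiber : B ∩ r ⁻¹' {r ω₀} = {ω | ∀ i ≤ m, ω i = ω₀ i} := by
    ext ω
    simp only [Set.mem_inter_iff, Set.mem_preimage, Set.mem_singleton_iff, r, funext_iff,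
      Fin.forall_iff, Nat.lt_succ_iff, Set.mem_ofPred_eq]
    exact ⟨And.right, fun h => ⟨hBm ω₀ ω (fun i hi => (h i hi).symm) hω₀B, h⟩⟩
  rw [Set.inter_right_comm, hfiber, measure_agree_inter_eval_succ, hBt ω₀ hω₀B]

lemma tsum_taboo (L : Set S) (m : ℕ) (s : S) :
    ∑' t, M.taboo L m s t = M.ℙ s (avoiding L m) := by
  rw [measure_eq_tsum_inter_preimage_singleton _ (measurable_pi_apply m)
    (measurableSet_avoiding L.to_countable.measurableSet m)]
  exact tsum_congr fun t => congrArg _ (Set.inter_comm _ _)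

lemma tsum_taboo_mul (L : Set S) (m : ℕ) (s u : S) :
    ∑' t, M.taboo L m s t * M.p t u = M.ℙ s (avoiding L m ∩ {ω | ω (m + 1) = u}) := by
  rw [measure_eq_tsum_inter_preimage_singleton _ (measurable_pi_apply m)
    ((measurableSet_avoiding L.to_countable.measurableSet m).inter
      (measurableSet_eval_eq (m + 1) u))]
  refine tsum_congr fun t => ?_
  rw [taboo, ← M.measure_inter_eval_succ s ((measurableSet_eval_eq m t).inter
    (measurableSet_avoiding L.to_countable.measurableSet m)) ?_ (fun ω hω => hω.1)]
  · congr 1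
    ext ω
    simp only [Set.mem_inter_iff, Set.mem_preimage, Set.mem_singleton_iff, Set.mem_ofPred_eq]
    tauto
  · rintro ω ω' hωω' ⟨hωt, hω⟩
    refine ⟨(hωω' m le_rfl).symm.trans hωt, fun k hk1 hk => ?_⟩
    rw [← hωω' k hk]
    exact hω k hk1 hk

lemma tsum_mul_taboo_zero (L : Set S) (μ : S → ENNReal) (t : S) :
    ∑' s, μ s * M.taboo L 0 s t = μ t := by
  have hzero : ∀ s, s ≠ t → M.taboo L 0 s t = 0 := fun s hst => by
    have := M.prob s
    exact measure_mono_null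
      (fun ω (hω : ω 0 = t ∧ _) (hωs : ω 0 = s) => hst (hωs.symm.trans hω.1))
      (prob_compl_eq_zero_iff (measurableSet_eval_eq 0 s) |>.2 (M.init s))
  have hone : M.taboo L 0 t t = 1 := by
    rw [taboo, avoiding_zero, Set.inter_univ, M.init t]
  rw [tsum_eq_single t fun s hs => by rw [hzero s hs, mul_zero], hone, mul_one]

variable {L : Set S}

lemma tsum_measure_avoiding_inter_eval_succ {u : S} (hu : u ∈ L) (s : S) :
    ∑' m, M.ℙ s (avoiding L m ∩ {ω | ω (m + 1) = u}) = M.ℙ s (firstReturnAt L u) := by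
  rw [← iUnion_avoiding_inter_eval_succ,
    measure_iUnion (pairwise_disjoint_avoiding_inter_eval_succ hu) fun m =>
      (measurableSet_avoiding L.to_countable.measurableSet m).inter
      (measurableSet_eval_eq (m + 1) u)]

variable (μ : S → ENNReal)

lemma tsum_excursion : ∑' t, M.excursion L μ t = ∑' m, ∑' s, μ s * M.ℙ s (avoiding L m) := by
  simp only [excursion]
  rw [ENNReal.tsum_comm]
  refine tsum_congr fun m => ?_
  rw [ENNReal.tsum_comm]
  simp only [ENNReal.tsum_mul_left, tsum_taboo]

lemma excursion_eq_add (u : S) :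
    M.excursion L μ u = μ u + ∑' m, ∑' s, μ s * M.taboo L (m + 1) s u := by
  rw [excursion, tsum_eq_zero_add' ENNReal.summable, tsum_mul_taboo_zero]

lemma le_excursion (u : S) : μ u ≤ M.excursion L μ u := by
  rw [excursion_eq_add]
  exact le_self_add

lemma excursion_of_mem {u : S} (hu : u ∈ L) : M.excursion L μ u = μ u := by
  simp [excursion_eq_add, taboo_succ_of_mem M hu]

lemma tsum_excursion_mul (u : S) :
    ∑' t, M.excursion L μ t * M.p t u =
      ∑' m, ∑' s, μ s * M.ℙ s (avoiding L m ∩ {ω | ω (m + 1) = u}) := by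
  simp only [excursion, ← ENNReal.tsum_mul_right, mul_assoc]
  rw [ENNReal.tsum_comm]
  refine tsum_congr fun m => ?_
  rw [ENNReal.tsum_comm]
  simp only [ENNReal.tsum_mul_left, tsum_taboo_mul]

lemma excursion_stationary (hμL : ∀ s, s ∉ L → μ s = 0)
    (hinv : ∀ j ∈ L, ∑' i, μ i * M.ℙ i (firstReturnAt L j) = μ j) (u : S) :
    ∑' t, M.excursion L μ t * M.p t u = M.excursion L μ u := by
  rw [tsum_excursion_mul]
  by_cases hu : u ∈ L
  · rw [ENNReal.tsum_comm, excursion_of_mem M μ hu, ← hinv u hu]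
    simp only [ENNReal.tsum_mul_left, tsum_measure_avoiding_inter_eval_succ M hu]
  · simp only [excursion_eq_add, hμL u hu, zero_add, taboo_succ_of_notMem M hu]

end MarkovChain

lemma tsum_div_mul_eq_of_stationary {S : Type*} {ν : S → ENNReal} {p : S → S → ENNReal}
    (hν : ∀ t, ∑' s, ν s * p s t = ν t) (c : ENNReal) (t : S) :
    ∑' s, ν s / c * p s t = ν t / c := by
  simp only [div_eq_mul_inv, mul_right_comm _ c⁻¹, ENNReal.tsum_mul_right, hν]

theorem stmt16_general {S : Type*} [Countable S] [MeasurableSpace S] [MeasurableSingletonClass S]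
    (M : MarkovChain S) (L : Set S)
    (μ : S → ENNReal) (hμL : ∀ s, s ∉ L → μ s = 0) (hμ1 : ∑' s, μ s = 1)
    (PL : S → S → ENNReal)
    (hPL : ∀ i j : S, PL i j =
      M.ℙ i {ω | ∃ n : ℕ, 1 ≤ n ∧ ω n = j ∧ ∀ k, 1 ≤ k → k < n → ω k ∉ L})
    (hinv : ∀ j ∈ L, (∑' i, μ i * PL i j) = μ j)
    -- the occupation measure of one excursion
    (ν : S → ENNReal)
    (hν : ∀ t, ν t = ∑' m : ℕ, ∑' s, μ s *
      M.ℙ s {ω | ω m = t ∧ ∀ k, 1 ≤ k → k ≤ m → ω k ∉ L})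
    -- the expected return time to L starting from μ
    (T : ENNReal)
    (hT : T = ∑' m : ℕ, ∑' s, μ s *
      M.ℙ s {ω | ∀ k, 1 ≤ k → k ≤ m → ω k ∉ L}) :
    (∑' s, ν s) = T ∧
    (T < ⊤ →
      (∑' s, ν s / T) = 1 ∧ ∀ t : S, (∑' s, (ν s / T) * M.p s t) = ν t / T) := by
  obtain rfl : ν = M.excursion L μ := funext hν
  have hmass : ∑' t, M.excursion L μ t = T := (M.tsum_excursion μ).trans hT.symm
  have hcensored (j : S) (hj : j ∈ L) : ∑' i, μ i * M.ℙ i (MarkovChain.firstReturnAt L j) = μ j := by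
    simp only [← hinv j hj, hPL]
    rfl
  refine ⟨hmass, fun hTtop => ⟨?_, tsum_div_mul_eq_of_stationary
    (M.excursion_stationary μ hμL hcensored) T⟩⟩
  have hT1 : 1 ≤ T := hμ1 ▸ hmass ▸ ENNReal.tsum_le_tsum (M.le_excursion μ)
  have hT0 : T ≠ 0 := (zero_lt_one.trans_le hT1).ne'
  simp only [div_eq_mul_inv, ENNReal.tsum_mul_right, hmass, ENNReal.mul_inv_cancel hT0 hTtop.ne]

/-- For an irreducible positive recurrent chain started from a censored-invariant
distribution `μ` on the finite set `L`: the total mass of the excursion occupation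
measure `ν̄` equals `E_μ[T_L⁺]`, and if this expectation is finite then normalizing
`ν̄` yields a stationary probability distribution. -/
theorem stmt16 {S : Type*} [Countable S] [MeasurableSpace S] [MeasurableSingletonClass S]
    (M : MarkovChain S)
    (hirr : ∀ x y : S, ∃ n : ℕ, 0 < M.ℙ x {ω | ω n = y})
    -- positive recurrence: finite expected return time to every state
    (hpos : ∀ y : S,
      (∑' m : ℕ, M.ℙ y {ω | ∀ k, 1 ≤ k → k ≤ m → ω k ≠ y}) < ⊤)
    (L : Set S) (hLfin : L.Finite) (hLne : L.Nonempty)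
    (μ : S → ENNReal) (hμL : ∀ s, s ∉ L → μ s = 0) (hμ1 : ∑' s, μ s = 1)
    (PL : S → S → ENNReal)
    (hPL : ∀ i j : S, PL i j =
      M.ℙ i {ω | ∃ n : ℕ, 1 ≤ n ∧ ω n = j ∧ ∀ k, 1 ≤ k → k < n → ω k ∉ L})
    (hinv : ∀ j ∈ L, (∑' i, μ i * PL i j) = μ j)
    -- the occupation measure of one excursion
    (ν : S → ENNReal)
    (hν : ∀ t, ν t = ∑' m : ℕ, ∑' s, μ s *
      M.ℙ s {ω | ω m = t ∧ ∀ k, 1 ≤ k → k ≤ m → ω k ∉ L})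
    -- the expected return time to L starting from μ
    (T : ENNReal)
    (hT : T = ∑' m : ℕ, ∑' s, μ s *
      M.ℙ s {ω | ∀ k, 1 ≤ k → k ≤ m → ω k ∉ L}) :
    (∑' s, ν s) = T ∧
    (T < ⊤ →
      (∑' s, ν s / T) = 1 ∧ ∀ t : S, (∑' s, (ν s / T) * M.p s t) = ν t / T) :=
  stmt16_general M L μ hμL hμ1 PL hPL hinv ν hν T hT
end
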